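/- arXiv:math/0210221 — 9 statements merged into one kernel-verified Lean document; each statement's English description precedes it below -/
import Mathlib

section
/- Let A be an n×n complex matrix with a diagonalization A = Q·diag(c₁,…,cₙ)·Q⁻¹ and B a p×p complex matrix with a diagonalization B = R·diag(d₁,…,d_p)·R⁻¹, where Q and R are invertible. If S is a p×n complex matrix with S·A = B·S, then for every function f : ℂ → ℂ one has S·(Q·diag(f(c₁),…,f(cₙ))·Q⁻¹) = (R·diag(f(d₁),…,f(d_p))·R⁻¹)·S. In particular (taking n = p, A = B and S the identity), the matrix f(A) := Q·diag(f(c₁),…,f(cₙ))·Q⁻¹ does not depend on the chosen diagonalization of A. -/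
open Matrix

private lemma diag_intertwine {n p : ℕ}
    (T : Matrix (Fin p) (Fin n) ℂ) (c : Fin n → ℂ) (d : Fin p → ℂ)
    (h : T * Matrix.diagonal c = Matrix.diagonal d * T) (f : ℂ → ℂ) :
    T * Matrix.diagonal (fun i => f (c i)) =
      Matrix.diagonal (fun j => f (d j)) * T := by
  ext j i
  have h' : T j i * c i = d j * T j i := by
    have := congrFun (congrFun h j) i
    simpa [Matrix.mul_diagonal, Matrix.diagonal_mul] using this
  simp only [Matrix.mul_diagonal, Matrix.diagonal_mul]
  rcases eq_or_ne (T j i) 0 with h0 | h0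
  · simp [h0]
  · have hcd : c i = d j :=
      mul_left_cancel₀ h0 (by linear_combination h')
    rw [hcd, mul_comm]

private lemma main_intertwine {n p : ℕ}
    (Q : Matrix (Fin n) (Fin n) ℂ) (c : Fin n → ℂ)
    (R : Matrix (Fin p) (Fin p) ℂ) (d : Fin p → ℂ)
    (hQ : IsUnit Q.det) (hR : IsUnit R.det)
    (S : Matrix (Fin p) (Fin n) ℂ)
    (hS : S * (Q * Matrix.diagonal c * Q⁻¹) = (R * Matrix.diagonal d * R⁻¹) * S)
    (f : ℂ → ℂ) :
    S * (Q * Matrix.diagonal (fun i => f (c i)) * Q⁻¹) =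
      (R * Matrix.diagonal (fun j => f (d j)) * R⁻¹) * S := by
  have hQ1 : Q⁻¹ * Q = 1 := Matrix.nonsing_inv_mul Q hQ
  have hQ2 : Q * Q⁻¹ = 1 := Matrix.mul_nonsing_inv Q hQ
  have hR1 : R⁻¹ * R = 1 := Matrix.nonsing_inv_mul R hR
  have hR2 : R * R⁻¹ = 1 := Matrix.mul_nonsing_inv R hR
  set T := R⁻¹ * S * Q with hT
  have key : T * Matrix.diagonal c = Matrix.diagonal d * T := by
    have := congrArg (fun M => R⁻¹ * M * Q) hS
    simp only [hT, Matrix.mul_assoc] at this ⊢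
    rw [hQ1] at this
    simp only [Matrix.mul_one] at this
    rw [this]
    simp only [← Matrix.mul_assoc, hR1]
    simp [Matrix.mul_assoc]
  have key2 := diag_intertwine T c d key f
  have := congrArg (fun M => R * M * Q⁻¹) key2
  simp only [hT, Matrix.mul_assoc] at this
  rw [hQ2] at this
  simp only [Matrix.mul_one] at this
  simp only [← Matrix.mul_assoc, hR2, Matrix.one_mul] at this
  simp only [Matrix.mul_assoc] at this ⊢
  exact this

/-- If `S·A = B·S` where `A = Q·diag(c)·Q⁻¹` and `B = R·diag(d)·R⁻¹` are
diagonalized, then `S·(Q·diag(f∘c)·Q⁻¹) = (R·diag(f∘d)·R⁻¹)·S` for every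
function `f : ℂ → ℂ`.  In particular, `f(A) = Q·diag(f∘c)·Q⁻¹` does not
depend on the chosen diagonalization of `A`. -/
theorem intertwine_fun_of_diagonalizable
    {n p : ℕ}
    (A Q : Matrix (Fin n) (Fin n) ℂ) (c : Fin n → ℂ)
    (B R : Matrix (Fin p) (Fin p) ℂ) (d : Fin p → ℂ)
    (hQ : IsUnit Q.det) (hA : A = Q * Matrix.diagonal c * Q⁻¹)
    (hR : IsUnit R.det) (hB : B = R * Matrix.diagonal d * R⁻¹)
    (S : Matrix (Fin p) (Fin n) ℂ) (hS : S * A = B * S) :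
    (∀ f : ℂ → ℂ,
      S * (Q * Matrix.diagonal (fun i => f (c i)) * Q⁻¹) =
        (R * Matrix.diagonal (fun j => f (d j)) * R⁻¹) * S) ∧
    (∀ f : ℂ → ℂ, ∀ (Q' : Matrix (Fin n) (Fin n) ℂ) (c' : Fin n → ℂ),
      IsUnit Q'.det → A = Q' * Matrix.diagonal c' * Q'⁻¹ →
      Q * Matrix.diagonal (fun i => f (c i)) * Q⁻¹ =
        Q' * Matrix.diagonal (fun i => f (c' i)) * Q'⁻¹) := by
  constructor
  · intro f
    exact main_intertwine Q c R d hQ hR S (hA ▸ hB ▸ hS) f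
  · intro f Q' c' hQ' hA'
    have h1 : (1 : Matrix (Fin n) (Fin n) ℂ) *
        (Q' * Matrix.diagonal c' * Q'⁻¹) =
        (Q * Matrix.diagonal c * Q⁻¹) * 1 := by
      rw [Matrix.one_mul, Matrix.mul_one, ← hA, ← hA']
    have := main_intertwine Q' c' Q c hQ' hQ 1 h1 f
    rw [Matrix.one_mul, Matrix.mul_one] at this
    exact this.symm
end

section
/- Let A ∈ GL_n(ℂ) and B ∈ GL_p(ℂ) be constant invertible matrices, and let F be a p×n matrix of functions meromorphic on ℂ: there is a closed discrete set D ⊂ ℂ such that every entry of F is analytic on ℂ∖D and meromorphic at each point of D. Assume F(qz)·A = B·F(z) for every z with z ∉ D and qz ∉ D. Then F is a Laurent polynomial: there exist N ∈ ℕ and complex p×n matrices F_k for -N ≤ k ≤ N such that F(z) = ∑_{k=-N}^{N} F_k·z^k for every z ∈ ℂ∖(D ∪ {0}). -/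
open Matrix Filter Topology

attribute [local instance] Matrix.normedAddCommGroup Matrix.normedSpace

lemma laurent_dense_compl {D : Set ℂ} (hDd : DiscreteTopology D) : Dense Dᶜ := by
  intro z
  by_cases hz : z ∈ D
  · have h1 : 𝓝[≠] z ⊓ 𝓟 D = ⊥ := discreteTopology_subtype_iff.mp hDd z hz
    have h2 : Dᶜ ∈ 𝓝[≠] z := by rwa [inf_principal_eq_bot] at h1
    have h3 : ∃ᶠ y in 𝓝[≠] z, y ∈ Dᶜ :=
      Filter.Eventually.frequently (eventually_iff.mpr h2)
    exact mem_closure_iff_frequently.mpr (h3.filter_mono nhdsWithin_le_nhds)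
  · exact subset_closure hz

noncomputable def laurentCLM {p n : ℕ} (P : Matrix (Fin p) (Fin p) ℂ)
    (Q : Matrix (Fin n) (Fin n) ℂ) :
    Matrix (Fin p) (Fin n) ℂ →L[ℂ] Matrix (Fin p) (Fin n) ℂ :=
  LinearMap.toContinuousLinearMap
    { toFun := fun X => P * X * Q
      map_add' := fun X Y => by rw [Matrix.mul_add, Matrix.add_mul]
      map_smul' := fun c X => by rw [Matrix.mul_smul, Matrix.smul_mul]; rfl }

@[simp] lemma laurentCLM_apply {p n : ℕ} (P : Matrix (Fin p) (Fin p) ℂ)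
    (Q : Matrix (Fin n) (Fin n) ℂ) (X : Matrix (Fin p) (Fin n) ℂ) :
    laurentCLM P Q X = P * X * Q := rfl

lemma matrix_analyticAt {p n : ℕ} {f : ℂ → Matrix (Fin p) (Fin n) ℂ} {x : ℂ}
    (h : ∀ i j, AnalyticAt ℂ (fun z => f z i j) x) : AnalyticAt ℂ f x :=
  AnalyticAt.pi fun i => AnalyticAt.pi fun j => h i j

lemma clm_iteratedDeriv {E F' : Type*} [NormedAddCommGroup E] [NormedSpace ℂ E]
    [NormedAddCommGroup F'] [NormedSpace ℂ F'] (T : E →L[ℂ] F') {f : ℂ → E}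
    (hf : ContDiff ℂ ⊤ f) (k : ℕ) (x : ℂ) :
    iteratedDeriv k (fun z => T (f z)) x = T (iteratedDeriv k f x) := by
  have h := T.iteratedFDeriv_comp_left (hf.contDiffAt (x := x)) (i := k) le_top
  rw [iteratedDeriv_eq_iteratedFDeriv, iteratedDeriv_eq_iteratedFDeriv]
  show iteratedFDeriv ℂ k (T ∘ f) x (fun _ => 1) = _
  rw [h]
  rfl

/-- A matrix `F` of functions meromorphic on `ℂ` (analytic off a closed
discrete set `D`, meromorphic at each point of `D`) intertwining two constant
invertible matrices, `F(qz)·A = B·F(z)`, is a Laurent polynomial. -/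
theorem laurent_polynomial_of_intertwining
    (q : ℂ) (hq : 1 < ‖q‖) {n p : ℕ}
    (A : Matrix (Fin n) (Fin n) ℂ) (B : Matrix (Fin p) (Fin p) ℂ)
    (hA : IsUnit A.det) (hB : IsUnit B.det)
    (F : ℂ → Matrix (Fin p) (Fin n) ℂ) (D : Set ℂ)
    (hDclosed : IsClosed D) (hDdiscrete : DiscreteTopology D)
    (hFanalytic : ∀ i j, AnalyticOnNhd ℂ (fun z => F z i j) Dᶜ)
    (hFmero : ∀ d ∈ D, ∀ i j, MeromorphicAt (fun z => F z i j) d)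
    (hFeq : ∀ z : ℂ, z ∉ D → q * z ∉ D → F (q * z) * A = B * F z) :
    ∃ (N : ℕ) (Fk : ℤ → Matrix (Fin p) (Fin n) ℂ),
      ∀ z : ℂ, z ∉ D → z ≠ 0 →
        F z = ∑ k ∈ Finset.Icc (-(N : ℤ)) (N : ℤ), z ^ k • Fk k := by
  classical
  have hq0 : q ≠ 0 := by
    intro h
    rw [h, norm_zero] at hq
    exact absurd hq (by norm_num)
  have hqpow : ∀ m : ℕ, (q : ℂ) ^ m ≠ 0 := fun m => pow_ne_zero m hq0
  have hAAi : A * A⁻¹ = 1 := Matrix.mul_nonsing_inv A hA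
  have hAiA : A⁻¹ * A = 1 := Matrix.nonsing_inv_mul A hA
  set H : ℕ → ℂ → Matrix (Fin p) (Fin n) ℂ :=
    fun m z => B ^ m * F (z / q ^ m) * A⁻¹ ^ m with hHdef
  have hH0 : ∀ z, H 0 z = F z := by
    intro z
    simp [hHdef]
  -- one-step relation
  have hH1 : ∀ (m : ℕ) (z : ℂ), z / q ^ m ∉ D → z / q ^ (m + 1) ∉ D →
      H (m + 1) z = H m z := by
    intro m z h1 h2
    have hw : q * (z / q ^ (m + 1)) = z / q ^ m := by
      rw [pow_succ']
      field_simp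
    have he := hFeq (z / q ^ (m + 1)) h2 (by rw [hw]; exact h1)
    rw [hw] at he
    have hF' : F (z / q ^ m) = B * F (z / q ^ (m + 1)) * A⁻¹ := by
      calc F (z / q ^ m) = F (z / q ^ m) * (A * A⁻¹) := by rw [hAAi, Matrix.mul_one]
      _ = F (z / q ^ m) * A * A⁻¹ := by rw [Matrix.mul_assoc]
      _ = B * F (z / q ^ (m + 1)) * A⁻¹ := by rw [he]
    show B ^ (m + 1) * F (z / q ^ (m + 1)) * A⁻¹ ^ (m + 1) = B ^ m * F (z / q ^ m) * A⁻¹ ^ m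
    rw [hF', pow_succ B, pow_succ' A⁻¹]
    simp only [Matrix.mul_assoc]
  -- chains
  have hHchain : ∀ (z : ℂ) (K : ℕ), (∀ i, i ≤ K → z / q ^ i ∉ D) →
      ∀ m, m ≤ K → H m z = H 0 z := by
    intro z K hall m
    induction m with
    | zero => intro _; rfl
    | succ m ih =>
      intro hm
      rw [hH1 m z (hall m (Nat.le_of_succ_le hm)) (hall (m + 1) hm)]
      exact ih (Nat.le_of_succ_le hm)
  -- analyticity of H m off (q^m) D
  have hHanalytic : ∀ (m : ℕ) (z : ℂ), z / q ^ m ∉ D → AnalyticAt ℂ (H m) z := by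
    intro m z hz
    have hdiv : AnalyticAt ℂ (fun w : ℂ => w / q ^ m) z := by
      have h : AnalyticAt ℂ (fun w : ℂ => w * (q ^ m)⁻¹) z := analyticAt_id.mul analyticAt_const
      refine h.congr ?_
      filter_upwards with w
      rw [div_eq_mul_inv]
    have hFan : AnalyticAt ℂ F (z / q ^ m) :=
      matrix_analyticAt (fun i j => hFanalytic i j _ hz)
    have h1 : AnalyticAt ℂ (F ∘ fun w : ℂ => w / q ^ m) z := AnalyticAt.comp (f := fun w : ℂ => w / q ^ m) (x := z) hFan hdiv
    have h2 : AnalyticAt ℂ ((laurentCLM (B ^ m) (A⁻¹ ^ m)) ∘ (F ∘ fun w : ℂ => w / q ^ m)) z :=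
      ((laurentCLM (B ^ m) (A⁻¹ ^ m)).analyticAt _).comp h1
    exact h2
  -- escape to 0
  have htend : ∀ z : ℂ, Tendsto (fun m : ℕ => z / q ^ m) atTop (𝓝 0) := by
    intro z
    have habs : ‖q⁻¹‖ < 1 := by
      rw [norm_inv]
      apply inv_lt_one_of_one_lt₀
      exact hq
    have h := tendsto_pow_atTop_nhds_zero_of_norm_lt_one habs
    have h2 := h.const_mul z
    rw [mul_zero] at h2
    refine h2.congr fun m => ?_
    rw [inv_pow, ← div_eq_mul_inv]
  have hNfex : ∀ z : ℂ, ∃ M : ℕ, z ≠ 0 → ∀ m, M ≤ m → z / q ^ m ∉ D := by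
    intro z
    by_cases hz : z = 0
    · exact ⟨0, fun h => absurd hz h⟩
    by_contra hcon
    push_neg at hcon
    have hfreq : ∃ᶠ m in atTop, z / q ^ m ∈ D \ {0} := by
      rw [frequently_atTop]
      intro M
      obtain ⟨-, m, hm1, hm2⟩ := hcon M
      exact ⟨m, hm1, hm2, by simp [div_ne_zero hz (hqpow m)]⟩
    have hcl : (0 : ℂ) ∈ closure (D \ {0}) :=
      mem_closure_of_frequently_of_tendsto hfreq (htend z)
    have h0D : (0 : ℂ) ∈ D := by
      have h := (closure_mono Set.diff_subset) hcl
      rwa [hDclosed.closure_eq] at h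
    have hbot : 𝓝[≠] (0 : ℂ) ⊓ 𝓟 D = ⊥ := discreteTopology_subtype_iff.mp hDdiscrete 0 h0D
    have hne : (𝓝[D \ {0}] (0 : ℂ)).NeBot := mem_closure_iff_nhdsWithin_neBot.mp hcl
    have hle : 𝓝[D \ {0}] (0 : ℂ) ≤ 𝓝[≠] (0 : ℂ) ⊓ 𝓟 D := by
      refine le_inf (nhdsWithin_mono _ fun x hx => hx.2) ?_
      rw [nhdsWithin]
      exact le_trans inf_le_right (principal_mono.mpr Set.diff_subset)
    rw [hbot, le_bot_iff] at hle
    exact hne.ne hle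
  choose Nf hNf using hNfex
  -- dense good sets
  have hdenseW : ∀ K : ℕ, Dense {w : ℂ | ∀ i, i ≤ K → w / q ^ i ∉ D} ∧
      IsOpen {w : ℂ | ∀ i, i ≤ K → w / q ^ i ∉ D} := by
    intro K
    induction K with
    | zero =>
      have he : {w : ℂ | ∀ i, i ≤ 0 → w / q ^ i ∉ D} = Dᶜ := by
        ext w
        simp [Nat.le_zero]
      rw [he]
      exact ⟨laurent_dense_compl hDdiscrete, hDclosed.isOpen_compl⟩
    | succ K ih =>
      have he : {w : ℂ | ∀ i, i ≤ K + 1 → w / q ^ i ∉ D}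
          = {w : ℂ | ∀ i, i ≤ K → w / q ^ i ∉ D} ∩ {w : ℂ | w / q ^ (K + 1) ∈ D}ᶜ := by
        ext w
        simp only [Set.mem_inter_iff, Set.mem_setOf_eq, Set.mem_compl_iff]
        constructor
        · exact fun h => ⟨fun i hi => h i (hi.trans (Nat.le_succ K)), h (K + 1) le_rfl⟩
        · rintro ⟨h1, h2⟩ i hi
          rcases eq_or_lt_of_le hi with h | h
          · rw [h]; exact h2
          · exact h1 i (by omega)
      have hcont : Continuous (fun w : ℂ => w / q ^ (K + 1)) := continuous_id.div_const _
      have hopen2 : IsOpen {w : ℂ | w / q ^ (K + 1) ∈ D}ᶜ :=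
        (hDclosed.preimage hcont).isOpen_compl
      have hdense2 : Dense {w : ℂ | w / q ^ (K + 1) ∈ D}ᶜ := by
        intro z
        rw [mem_closure_iff_frequently]
        have h1 : ∃ᶠ y in 𝓝 (z / q ^ (K + 1)), y ∉ D :=
          mem_closure_iff_frequently.mp (laurent_dense_compl hDdiscrete (z / q ^ (K + 1)))
        have h2 : Tendsto (fun y : ℂ => y * q ^ (K + 1)) (𝓝 (z / q ^ (K + 1))) (𝓝 z) := by
          have h3 := (continuous_mul_right (q ^ (K + 1))).tendsto (z / q ^ (K + 1))
          rwa [div_mul_cancel₀ _ (hqpow (K + 1))] at h3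
        apply h2.frequently
        refine h1.mono fun y hy => ?_
        show y * q ^ (K + 1) / q ^ (K + 1) ∉ D
        rwa [mul_div_cancel_right₀ _ (hqpow (K + 1))]
      rw [he]
      exact ⟨ih.1.inter_of_isOpen_left hdense2 ih.2, ih.2.inter hopen2⟩
  -- key gluing
  have hH2 : ∀ (z : ℂ) (m m' : ℕ), z / q ^ m ∉ D → z / q ^ m' ∉ D → H m z = H m' z := by
    intro z m m' hm hm'
    have hWd := (hdenseW (max m m')).1
    have hne : (𝓝[{w : ℂ | ∀ i, i ≤ max m m' → w / q ^ i ∉ D}] z).NeBot :=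
      mem_closure_iff_nhdsWithin_neBot.mp (hWd z)
    have heq : ∀ w ∈ {w : ℂ | ∀ i, i ≤ max m m' → w / q ^ i ∉ D}, H m' w = H m w := fun w hw =>
      (hHchain w (max m m') hw m' (le_max_right _ _)).trans
        (hHchain w (max m m') hw m (le_max_left _ _)).symm
    have h1 : Tendsto (H m) (𝓝[{w : ℂ | ∀ i, i ≤ max m m' → w / q ^ i ∉ D}] z) (𝓝 (H m z)) :=
      ((hHanalytic m z hm).continuousAt).continuousWithinAt
    have h2 : Tendsto (H m) (𝓝[{w : ℂ | ∀ i, i ≤ max m m' → w / q ^ i ∉ D}] z)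
        (𝓝 (H m' z)) := by
      refine Filter.Tendsto.congr' ?_ ((hHanalytic m' z hm').continuousAt).continuousWithinAt
      filter_upwards [self_mem_nhdsWithin] with w hw
      exact heq w hw
    exact tendsto_nhds_unique h1 h2
  -- G := fun z => H (Nf z) z agrees with F off D and is analytic off 0
  have hGF : ∀ z : ℂ, z ∉ D → z ≠ 0 → H (Nf z) z = F z := by
    intro z hzD hz0
    rw [hH2 z (Nf z) 0 (hNf z hz0 _ le_rfl) (by simpa using hzD)]
    exact hH0 z
  have hGanalytic : ∀ z : ℂ, z ≠ 0 → AnalyticAt ℂ (fun w => H (Nf w) w) z := by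
    intro z hz
    have hzm : z / q ^ (Nf z) ∉ D := hNf z hz _ le_rfl
    refine (hHanalytic (Nf z) z hzm).congr ?_
    have ho : IsOpen ({w : ℂ | w ≠ 0} ∩ {w : ℂ | w / q ^ (Nf z) ∈ D}ᶜ) := by
      refine IsOpen.inter isOpen_compl_singleton ?_
      exact (hDclosed.preimage (continuous_id.div_const _)).isOpen_compl
    filter_upwards [ho.mem_nhds ⟨hz, hzm⟩] with w hw
    exact hH2 w (Nf z) (Nf w) hw.2 (hNf w hw.1 _ le_rfl)
  have hGeq : ∀ z : ℂ, z ≠ 0 → H (Nf (q * z)) (q * z) * A = B * H (Nf z) z := by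
    intro z hz
    have hqz0 : q * z ≠ 0 := mul_ne_zero hq0 hz
    have harith : q * z / q ^ (Nf z + 1) = z / q ^ (Nf z) := by
      rw [pow_succ', mul_div_mul_left _ _ hq0]
    have h1 : H (Nf (q * z)) (q * z) = H (Nf z + 1) (q * z) :=
      hH2 (q * z) _ _ (hNf (q * z) hqz0 _ le_rfl)
        (by rw [harith]; exact hNf z hz _ le_rfl)
    rw [h1]
    show B ^ (Nf z + 1) * F (q * z / q ^ (Nf z + 1)) * A⁻¹ ^ (Nf z + 1) * A
        = B * (B ^ (Nf z) * F (z / q ^ (Nf z)) * A⁻¹ ^ (Nf z))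
    rw [harith, pow_succ' B, pow_succ A⁻¹]
    simp only [Matrix.mul_assoc, hAiA, Matrix.mul_one]
  -- meromorphy at 0
  have hpunct : Dᶜ ∈ 𝓝[≠] (0 : ℂ) := by
    by_cases h0 : (0 : ℂ) ∈ D
    · have h1 := discreteTopology_subtype_iff.mp hDdiscrete 0 h0
      rwa [inf_principal_eq_bot] at h1
    · exact mem_nhdsWithin_of_mem_nhds (hDclosed.isOpen_compl.mem_nhds h0)
  have hGmero : MeromorphicAt (fun w => H (Nf w) w) (0 : ℂ) := by
    have hFm : MeromorphicAt F (0 : ℂ) := by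
      by_cases h0 : (0 : ℂ) ∈ D
      · have h2 : ∀ ij : Fin p × Fin n, ∃ k : ℕ,
            AnalyticAt ℂ (fun z => (z - 0) ^ k • F z ij.1 ij.2) 0 :=
          fun ij => hFmero 0 h0 ij.1 ij.2
        choose e he using h2
        refine ⟨Finset.univ.sup e, ?_⟩
        apply matrix_analyticAt
        intro i j
        have hle : e (i, j) ≤ Finset.univ.sup e := Finset.le_sup (Finset.mem_univ _)
        have hfe : (fun z : ℂ => ((z - 0) ^ (Finset.univ.sup e) • F z) i j)
            = fun z : ℂ => (z - 0) ^ (Finset.univ.sup e - e (i, j))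
                * ((z - 0) ^ (e (i, j)) • F z i j) := by
          funext z
          show (z - 0) ^ (Finset.univ.sup e) * F z i j = _
          rw [smul_eq_mul, ← mul_assoc, ← pow_add, Nat.sub_add_cancel hle]
        rw [hfe]
        exact (((analyticAt_id.sub analyticAt_const).pow _).mul (he (i, j)))
      · exact (matrix_analyticAt (fun i j => hFanalytic i j 0 h0)).meromorphicAt
    refine hFm.congr ?_
    filter_upwards [hpunct, self_mem_nhdsWithin] with w hwD hw0
    exact (hGF w hwD hw0).symm
  obtain ⟨N₀, hN₀⟩ := hGmero
  set Φ : ℂ → Matrix (Fin p) (Fin n) ℂ := fun z => z ^ (N₀ + 1) • H (Nf z) z with hPhidef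
  have hPhi0 : AnalyticAt ℂ Φ 0 := by
    have h1 : AnalyticAt ℂ (fun z : ℂ => (z - 0) • ((z - 0) ^ N₀ • H (Nf z) z)) 0 :=
      (analyticAt_id.sub analyticAt_const).smul hN₀
    refine h1.congr ?_
    filter_upwards with z
    simp only [hPhidef, smul_smul, sub_zero, ← pow_succ']
  have hPhidiff : Differentiable ℂ Φ := by
    intro z
    by_cases hz : z = 0
    · rw [hz]; exact hPhi0.differentiableAt
    · refine AnalyticAt.differentiableAt ?_
      simp only [hPhidef]
      exact (analyticAt_id.pow _).smul (hGanalytic z hz)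
  have hPhieq : ∀ z : ℂ, Φ (q * z) * A = q ^ (N₀ + 1) • (B * Φ z) := by
    intro z
    by_cases hz : z = 0
    · rw [hz, mul_zero]
      simp only [hPhidef]
      rw [zero_pow (Nat.succ_ne_zero N₀), zero_smul, Matrix.zero_mul, Matrix.mul_zero, smul_zero]
    · simp only [hPhidef]
      rw [Matrix.smul_mul, hGeq z hz, mul_pow, Matrix.mul_smul, smul_smul]
  haveI : CompleteSpace (Matrix (Fin p) (Fin n) ℂ) := FiniteDimensional.complete ℂ _
  have hTaylor : ∀ z : ℂ,
      HasSum (fun k : ℕ => ((Nat.factorial k : ℂ))⁻¹ • z ^ k • iteratedDeriv k Φ 0) (Φ z) := by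
    intro z
    have h := Complex.hasSum_taylorSeries_of_entire hPhidiff 0 z
    simp only [sub_zero] at h
    exact h
  -- coefficient relation
  have hCrel : ∀ k : ℕ, q ^ k • ((iteratedDeriv k Φ 0) * A)
      = q ^ (N₀ + 1) • (B * iteratedDeriv k Φ 0) := by
    intro k
    have hPsi : Differentiable ℂ (fun z : ℂ => Φ (q * z)) :=
      hPhidiff.comp (differentiable_id.const_mul q)
    have h1 := clm_iteratedDeriv (laurentCLM (1 : Matrix (Fin p) (Fin p) ℂ) A)
      hPsi.contDiff k 0
    change iteratedDeriv k (fun z => (1 : Matrix (Fin p) (Fin p) ℂ) * Φ (q * z) * A) 0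
      = (1 : Matrix (Fin p) (Fin p) ℂ) * iteratedDeriv k (fun z => Φ (q * z)) 0 * A at h1
    simp only [laurentCLM_apply, Matrix.one_mul] at h1
    have h2 := congrFun (iteratedDeriv_comp_const_smul (n := k) hPhidiff.contDiff q) 0
    rw [mul_zero] at h2
    have h3 := clm_iteratedDeriv ((q ^ (N₀ + 1)) • laurentCLM B (1 : Matrix (Fin n) (Fin n) ℂ))
      hPhidiff.contDiff k 0
    change iteratedDeriv k (fun z => q ^ (N₀ + 1) • (B * Φ z * (1 : Matrix (Fin n) (Fin n) ℂ))) 0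
      = q ^ (N₀ + 1) • (B * iteratedDeriv k Φ 0 * (1 : Matrix (Fin n) (Fin n) ℂ)) at h3
    simp only [ContinuousLinearMap.smul_apply, laurentCLM_apply, Matrix.mul_one] at h3
    have hfe : (fun z : ℂ => Φ (q * z) * A) = fun z : ℂ => q ^ (N₀ + 1) • (B * Φ z) :=
      funext hPhieq
    calc q ^ k • ((iteratedDeriv k Φ 0) * A)
        = (q ^ k • iteratedDeriv k Φ 0) * A := by rw [Matrix.smul_mul]
      _ = (iteratedDeriv k (fun z : ℂ => Φ (q * z)) 0) * A := by rw [h2]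
      _ = iteratedDeriv k (fun z : ℂ => Φ (q * z) * A) 0 := h1.symm
      _ = iteratedDeriv k (fun z : ℂ => q ^ (N₀ + 1) • (B * Φ z)) 0 := by rw [hfe]
      _ = q ^ (N₀ + 1) • (B * iteratedDeriv k Φ 0) := h3
  -- eigenvalue argument: only finitely many nonzero Taylor coefficients
  haveI : FiniteDimensional ℂ (Matrix (Fin p) (Fin n) ℂ) := by infer_instance
  set T : Module.End ℂ (Matrix (Fin p) (Fin n) ℂ) :=
    { toFun := fun X => B * X * A⁻¹
      map_add' := fun X Y => by rw [Matrix.mul_add, Matrix.add_mul]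
      map_smul' := fun c X => by rw [Matrix.mul_smul, Matrix.smul_mul]; rfl }
    with hTdef
  have hTapp : ∀ X, T X = B * X * A⁻¹ := fun X => rfl
  have hTspec : (spectrum ℂ T).Finite := Module.End.finite_spectrum T
  have hCzero : ∀ k : ℕ, iteratedDeriv k Φ 0 ≠ 0 →
      (q ^ k * (q ^ (N₀ + 1))⁻¹) ∈ spectrum ℂ T := by
    intro k hk
    have h2 := hCrel k
    have h3 := congrArg (fun Y => Y * A⁻¹) h2
    simp only [Matrix.smul_mul] at h3
    rw [Matrix.mul_assoc, hAAi, Matrix.mul_one] at h3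
    have h1 : T (iteratedDeriv k Φ 0) = (q ^ k * (q ^ (N₀ + 1))⁻¹) • iteratedDeriv k Φ 0 := by
      rw [hTapp]
      have h4 : B * iteratedDeriv k Φ 0 * A⁻¹ = (q ^ (N₀ + 1))⁻¹ • (q ^ k • iteratedDeriv k Φ 0) := by
        rw [h3, smul_smul, inv_mul_cancel₀ (hqpow (N₀ + 1)), one_smul]
      rw [h4, smul_smul, mul_comm]
    have hev : Module.End.HasEigenvalue T (q ^ k * (q ^ (N₀ + 1))⁻¹) :=
      Module.End.hasEigenvalue_of_hasEigenvector
        ⟨Module.End.mem_eigenspace_iff.mpr h1, hk⟩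
    exact Module.End.hasEigenvalue_iff_mem_spectrum.mp hev
  have hinj : Function.Injective (fun k : ℕ => q ^ k * (q ^ (N₀ + 1))⁻¹) := by
    intro a b hab
    simp only [] at hab
    have h1 : (q : ℂ) ^ a = q ^ b :=
      mul_right_cancel₀ (inv_ne_zero (hqpow (N₀ + 1))) hab
    have h2 : ‖q‖ ^ a = ‖q‖ ^ b := by
      rw [← norm_pow, ← norm_pow, h1]
    exact pow_right_injective₀ (by positivity : (0:ℝ) < ‖q‖) (by linarith : ‖q‖ ≠ 1) h2
  have hSfin : {k : ℕ | iteratedDeriv k Φ 0 ≠ 0}.Finite := by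
    have hsub : {k : ℕ | iteratedDeriv k Φ 0 ≠ 0}
        ⊆ (fun k : ℕ => q ^ k * (q ^ (N₀ + 1))⁻¹) ⁻¹' (spectrum ℂ T) :=
      fun k hk => hCzero k hk
    exact ((hTspec.preimage hinj.injOn)).subset hsub
  obtain ⟨M, hM⟩ := hSfin.bddAbove
  have hCz : ∀ k : ℕ, M < k → iteratedDeriv k Φ 0 = 0 := by
    intro k hk
    by_contra hne
    exact absurd (hM hne) (not_le.mpr hk)
  have hPhipoly : ∀ z : ℂ, Φ z = ∑ k ∈ Finset.range (M + 1),
      ((Nat.factorial k : ℂ))⁻¹ • z ^ k • iteratedDeriv k Φ 0 := by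
    intro z
    refine (hTaylor z).unique ?_
    apply hasSum_sum_of_ne_finset_zero
    intro k hk
    rw [hCz k (by simp only [Finset.mem_range] at hk; omega), smul_zero, smul_zero]
  -- final assembly
  set Fk : ℤ → Matrix (Fin p) (Fin n) ℂ := fun k =>
    if 0 ≤ k + ((N₀ : ℤ) + 1) ∧ k + ((N₀ : ℤ) + 1) ≤ (M : ℤ) then
      ((Nat.factorial ((k + ((N₀ : ℤ) + 1)).toNat) : ℂ))⁻¹ •
        iteratedDeriv ((k + ((N₀ : ℤ) + 1)).toNat) Φ 0
    else 0 with hFkdef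
  have hFkpos : ∀ j : ℕ, j ≤ M → Fk ((j : ℤ) - ((N₀ : ℤ) + 1))
      = ((Nat.factorial j : ℂ))⁻¹ • iteratedDeriv j Φ 0 := by
    intro j hj
    rw [hFkdef]
    simp only []
    rw [if_pos (by constructor <;> omega)]
    rw [show ((j : ℤ) - ((N₀ : ℤ) + 1) + ((N₀ : ℤ) + 1)).toNat = j from by omega]
  have hFkneg : ∀ x : ℤ, ¬(0 ≤ x + ((N₀ : ℤ) + 1) ∧ x + ((N₀ : ℤ) + 1) ≤ (M : ℤ)) →
      Fk x = 0 := by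
    intro x hx
    rw [hFkdef]
    simp only []
    rw [if_neg hx]
  refine ⟨(N₀ + 1) + M, Fk, ?_⟩
  intro z hzD hz0
  have hzN : z ^ (N₀ + 1) ≠ 0 := pow_ne_zero _ hz0
  have hFz : F z = (z ^ (N₀ + 1))⁻¹ • Φ z := by
    rw [← hGF z hzD hz0]
    simp only [hPhidef]
    rw [smul_smul, inv_mul_cancel₀ hzN, one_smul]
  have hsub : (Finset.range (M + 1)).image (fun j : ℕ => (j : ℤ) - ((N₀ : ℤ) + 1))
      ⊆ Finset.Icc (-(((N₀ + 1) + M : ℕ) : ℤ)) (((N₀ + 1) + M : ℕ) : ℤ) := by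
    intro x hx
    simp only [Finset.mem_image, Finset.mem_range] at hx
    obtain ⟨j, hj, rfl⟩ := hx
    simp only [Finset.mem_Icc]
    push_cast
    omega
  have hstep1 : ∑ k ∈ Finset.Icc (-(((N₀ + 1) + M : ℕ) : ℤ)) (((N₀ + 1) + M : ℕ) : ℤ),
        z ^ k • Fk k
      = ∑ k ∈ (Finset.range (M + 1)).image (fun j : ℕ => (j : ℤ) - ((N₀ : ℤ) + 1)),
        z ^ k • Fk k := by
    refine (Finset.sum_subset hsub ?_).symm
    intro x hx hnx
    have hc : ¬(0 ≤ x + ((N₀ : ℤ) + 1) ∧ x + ((N₀ : ℤ) + 1) ≤ (M : ℤ)) := by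
      intro hcc
      refine hnx (Finset.mem_image.mpr ⟨(x + ((N₀ : ℤ) + 1)).toNat,
        Finset.mem_range.mpr (by omega), by omega⟩)
    rw [hFkneg x hc, smul_zero]
  have hstep2 : ∑ k ∈ (Finset.range (M + 1)).image (fun j : ℕ => (j : ℤ) - ((N₀ : ℤ) + 1)),
        z ^ k • Fk k
      = ∑ j ∈ Finset.range (M + 1),
        z ^ ((j : ℤ) - ((N₀ : ℤ) + 1)) • Fk ((j : ℤ) - ((N₀ : ℤ) + 1)) := by
    refine Finset.sum_image ?_
    intro a _ b _ hab
    beta_reduce at hab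
    omega
  rw [hFz, hPhipoly z, Finset.smul_sum, hstep1, hstep2]
  refine Finset.sum_congr rfl ?_
  intro j hj
  rw [hFkpos j (by simp only [Finset.mem_range] at hj; omega)]
  rw [zpow_sub₀ hz0, div_eq_mul_inv]
  rw [show ((N₀ : ℤ) + 1) = ((N₀ + 1 : ℕ) : ℤ) by push_cast; ring]
  rw [zpow_natCast, zpow_natCast]
  simp only [smul_smul]
  congr 1
  ring
end

section
/- Let A ∈ GL_n(ℂ) and B ∈ GL_p(ℂ), and let F be a p×n matrix of functions meromorphic on ℂ (analytic off a closed discrete set D) satisfying F(qz)·A = B·F(z) for every z with z ∉ D and qz ∉ D. If F(z₀) = 0 for some z₀ ∈ ℂ∖(D ∪ {0}), then F vanishes identically: F(z) = 0 for every z ∈ ℂ∖(D ∪ {0}). (Hence evaluation at any point z₀ ∈ ℂ* defines a faithful fibre functor on the category of flat q-difference systems with meromorphic morphisms.) -/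
open Matrix Filter Topology

/-- A function meromorphic at a point which vanishes frequently on a punctured
neighbourhood vanishes eventually on a punctured neighbourhood. -/
lemma mero_freq_zero {f : ℂ → ℂ} {x : ℂ} (hf : MeromorphicAt f x)
    (h : ∃ᶠ z in 𝓝[≠] x, f z = 0) : ∀ᶠ z in 𝓝[≠] x, f z = 0 := by
  obtain ⟨m, hm⟩ := hf
  have hg : ∃ᶠ z in 𝓝[≠] x, (z - x) ^ m • f z = 0 :=
    h.mono fun z hz => by simp [hz]
  have hev : ∀ᶠ z in 𝓝 x, (fun z => (z - x) ^ m • f z) z = 0 :=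
    hm.frequently_zero_iff_eventually_zero.mp hg
  filter_upwards [self_mem_nhdsWithin, nhdsWithin_le_nhds hev] with z hz h1
  have hne : (z - x) ^ m ≠ 0 := pow_ne_zero _ (sub_ne_zero.mpr hz)
  simpa [smul_eq_mul, hne] using h1

/-- If a matrix `F` of functions meromorphic on `ℂ` intertwines two constant
invertible matrices, `F(qz)·A = B·F(z)`, and vanishes at one point
`z₀ ∈ ℂ*` outside the singular set, then it vanishes identically. Hence
evaluation at any point of `ℂ*` is faithful. -/
theorem vanishing_of_intertwining_at_point
    (q : ℂ) (hq : 1 < ‖q‖) {n p : ℕ}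
    (A : Matrix (Fin n) (Fin n) ℂ) (B : Matrix (Fin p) (Fin p) ℂ)
    (hA : IsUnit A.det) (hB : IsUnit B.det)
    (F : ℂ → Matrix (Fin p) (Fin n) ℂ) (D : Set ℂ)
    (hDclosed : IsClosed D) (hDdiscrete : DiscreteTopology D)
    (hFanalytic : ∀ i j, AnalyticOnNhd ℂ (fun z => F z i j) Dᶜ)
    (hFmero : ∀ d ∈ D, ∀ i j, MeromorphicAt (fun z => F z i j) d)
    (hFeq : ∀ z : ℂ, z ∉ D → q * z ∉ D → F (q * z) * A = B * F z)
    (z₀ : ℂ) (hz₀D : z₀ ∉ D) (hz₀ : z₀ ≠ 0) (hF0 : F z₀ = 0) :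
    ∀ z : ℂ, z ∉ D → z ≠ 0 → F z = 0 := by
  haveI := hDdiscrete
  have hq0 : q ≠ 0 := by
    intro h
    rw [h] at hq; simp at hq; linarith
  -- the punctured-neighbourhood avoidance of D
  have master : ∀ x : ℂ, ∀ᶠ w in 𝓝[≠] x, w ∉ D := fun x =>
    disjoint_principal_right.mp (isClosed_and_discrete_iff.mp ⟨hDclosed, ⟨hDdiscrete⟩⟩ x)
  -- continuity of F off D
  have CF : ∀ z : ℂ, z ∉ D → ContinuousAt F z := by
    intro z hz
    exact continuousAt_pi.2 fun i => continuousAt_pi.2 fun j =>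
      ((hFanalytic i j) z hz).continuousAt
  -- the iterated intertwining relation
  have chain : ∀ k : ℕ, ∀ z : ℂ, z ∉ D → q ^ k * z ∉ D →
      F (q ^ k * z) * A ^ k = B ^ k * F z := by
    intro k
    induction k with
    | zero => intro z hz hz'; simp
    | succ k ih =>
      intro z hz hz'
      have hz'' : q ^ (k + 1) * z ∉ D := hz'
      -- eventual equality on the punctured neighbourhood of z
      have h1 : ∀ᶠ w in 𝓝[≠] z, w ∉ D :=
        nhdsWithin_le_nhds ((hDclosed.isOpen_compl.eventually_mem hz))
      have tmap : ∀ c : ℂ, c ≠ 0 → Tendsto (fun w => c * w) (𝓝[≠] z) (𝓝[≠] (c * z)) := by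
        intro c hc
        apply tendsto_nhdsWithin_of_tendsto_nhds_of_eventually_within
        · exact ((continuous_const.mul continuous_id).continuousAt).mono_left nhdsWithin_le_nhds
        · filter_upwards [self_mem_nhdsWithin] with w hw
          exact fun h => hw (mul_left_cancel₀ hc h)
      have h2 : ∀ᶠ w in 𝓝[≠] z, q ^ (k + 1) * w ∉ D :=
        (tmap (q ^ (k + 1)) (pow_ne_zero _ hq0)).eventually (master (q ^ (k + 1) * z))
      have h3 : ∀ᶠ w in 𝓝[≠] z, q * w ∉ D :=
        (tmap q hq0).eventually (master (q * z))
      have heq : ∀ᶠ w in 𝓝[≠] z,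
          F (q ^ (k + 1) * w) * A ^ (k + 1) = B ^ (k + 1) * F w := by
        filter_upwards [h1, h2, h3] with w hw1 hw2 hw3
        have hqkw : q ^ k * (q * w) ∉ D := by
          rw [← mul_assoc, ← pow_succ]; exact hw2
        have e1 := ih (q * w) hw3 hqkw
        have e2 := hFeq w hw1 hw3
        have hrw : q ^ (k + 1) * w = q ^ k * (q * w) := by ring
        calc F (q ^ (k + 1) * w) * A ^ (k + 1)
            = F (q ^ k * (q * w)) * (A ^ k * A) := by rw [hrw, pow_succ]
          _ = F (q ^ k * (q * w)) * A ^ k * A := (Matrix.mul_assoc _ _ _).symm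
          _ = B ^ k * F (q * w) * A := by rw [e1]
          _ = B ^ k * (F (q * w) * A) := Matrix.mul_assoc _ _ _
          _ = B ^ k * (B * F w) := by rw [e2]
          _ = B ^ k * B * F w := (Matrix.mul_assoc _ _ _).symm
          _ = B ^ (k + 1) * F w := by rw [pow_succ]
      -- conclude by continuity at z
      have cF1 : ContinuousAt (fun w => F (q ^ (k + 1) * w)) z := by
        exact ContinuousAt.comp (CF _ hz'')
          ((continuous_const.mul continuous_id).continuousAt)
      have c1 : ContinuousAt (fun w => F (q ^ (k + 1) * w) * A ^ (k + 1)) z :=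
        ((Continuous.matrix_mul continuous_id continuous_const).continuousAt).comp cF1
      have c2 : ContinuousAt (fun w => B ^ (k + 1) * F w) z :=
        ((Continuous.matrix_mul continuous_const continuous_id).continuousAt).comp (CF z hz)
      have t1 : Tendsto (fun w => F (q ^ (k + 1) * w) * A ^ (k + 1)) (𝓝[≠] z)
          (𝓝 (F (q ^ (k + 1) * z) * A ^ (k + 1))) := c1.tendsto.mono_left nhdsWithin_le_nhds
      have t2 : Tendsto (fun w => B ^ (k + 1) * F w) (𝓝[≠] z)
          (𝓝 (B ^ (k + 1) * F z)) := c2.tendsto.mono_left nhdsWithin_le_nhds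
      have t1' : Tendsto (fun w => B ^ (k + 1) * F w) (𝓝[≠] z)
          (𝓝 (F (q ^ (k + 1) * z) * A ^ (k + 1))) := t1.congr' heq
      exact tendsto_nhds_unique t1' t2
  -- the backward orbit of z₀
  set w : ℕ → ℂ := fun k => z₀ * (q⁻¹) ^ k with hw
  have hwne : ∀ k, w k ≠ 0 := fun k =>
    mul_ne_zero hz₀ (pow_ne_zero _ (inv_ne_zero hq0))
  have hwlim : Tendsto w atTop (𝓝 0) := by
    have h0 : Tendsto (fun k : ℕ => (q⁻¹) ^ k) atTop (𝓝 0) := by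
      apply tendsto_pow_atTop_nhds_zero_of_norm_lt_one
      rw [norm_inv]
      rw [inv_lt_one_iff₀]
      right
      exact_mod_cast hq
    have := h0.const_mul z₀
    rw [mul_zero] at this
    exact this
  have hwlim' : Tendsto w atTop (𝓝[≠] 0) := by
    apply tendsto_nhdsWithin_of_tendsto_nhds_of_eventually_within _ hwlim
    exact Eventually.of_forall fun k => hwne k
  have hwD : ∀ᶠ k in atTop, w k ∉ D := hwlim'.eventually (master 0)
  -- F vanishes along the backward orbit
  have hBU : IsUnit B := (Matrix.isUnit_iff_isUnit_det B).2 hB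
  have hFw : ∀ᶠ k in atTop, F (w k) = 0 := by
    filter_upwards [hwD] with k hk
    have hqk : q ^ k * w k = z₀ := by
      rw [hw]; field_simp
      rw [one_div, ← mul_pow, mul_inv_cancel₀ hq0, one_pow]
    have h := chain k (w k) hk (by rw [hqk]; exact hz₀D)
    rw [hqk, hF0, Matrix.zero_mul] at h
    have hdet : IsUnit (B ^ k).det := by rw [Matrix.det_pow]; exact hB.pow k
    calc F (w k) = ((B ^ k)⁻¹ * B ^ k) * F (w k) := by
          rw [Matrix.nonsing_inv_mul _ hdet, Matrix.one_mul]
      _ = (B ^ k)⁻¹ * (B ^ k * F (w k)) := Matrix.mul_assoc _ _ _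
      _ = (B ^ k)⁻¹ * (0 : Matrix (Fin p) (Fin n) ℂ) := by rw [h.symm]
      _ = 0 := Matrix.mul_zero _
  -- D is countable, so its complement is preconnected
  have hDcount : D.Countable := by
    rw [← Set.countable_coe_iff]
    exact TopologicalSpace.separableSpace_iff_countable.mp inferInstance
  have hconn : IsPreconnected Dᶜ := by
    have h2 : (1 : Cardinal) < Module.rank ℝ ℂ := by
      rw [Complex.rank_real_complex]; exact Nat.one_lt_ofNat
    exact (hDcount.isPathConnected_compl_of_one_lt_rank h2).isConnected.isPreconnected
  -- each entry vanishes identically on Dᶜ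
  have hEntry : ∀ i j, Set.EqOn (fun z => F z i j) 0 Dᶜ := by
    intro i j
    set f : ℂ → ℂ := fun z => F z i j with hf
    have hfreq : ∃ᶠ z in 𝓝[≠] (0 : ℂ), f z = 0 := by
      apply hwlim'.frequently
      apply Eventually.frequently
      filter_upwards [hFw] with k hk
      rw [hf]; simp [hk]
    have hmero : MeromorphicAt f 0 := by
      by_cases h0 : (0 : ℂ) ∈ D
      · exact hFmero 0 h0 i j
      · exact ((hFanalytic i j) 0 h0).meromorphicAt
    have hev : ∀ᶠ z in 𝓝[≠] (0 : ℂ), f z = 0 := mero_freq_zero hmero hfreq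
    -- find a point of Dᶜ near 0 around which f vanishes on a neighbourhood
    have hev' : ∀ᶠ z in 𝓝[≠] (0 : ℂ), f z = 0 ∧ z ∉ D := hev.and (master 0)
    rw [eventually_nhdsWithin_iff] at hev'
    obtain ⟨s, hss, hso, hs0⟩ := mem_nhds_iff.mp hev'
    obtain ⟨r, hr, hball⟩ := Metric.isOpen_iff.mp hso 0 hs0
    set x : ℂ := ((r / 2 : ℝ) : ℂ) with hx
    have hxmem : x ∈ Metric.ball (0 : ℂ) r := by
      rw [Metric.mem_ball, hx, Complex.dist_eq, sub_zero, Complex.norm_real, Real.norm_eq_abs,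
        abs_of_pos (half_pos hr)]
      exact half_lt_self hr
    have hxne : x ≠ 0 := by
      simp only [hx, ne_eq, Complex.ofReal_eq_zero]
      exact (half_pos hr).ne'
    have hxs := hss (hball hxmem) hxne
    have hxD : x ∉ D := hxs.2
    have hfx : ∃ᶠ z in 𝓝[≠] x, f z = 0 := by
      apply Eventually.frequently
      apply nhdsWithin_le_nhds
      have hopen : IsOpen (s ∩ {(0 : ℂ)}ᶜ) := hso.inter isOpen_compl_singleton
      filter_upwards [hopen.eventually_mem ⟨hball hxmem, hxne⟩] with z hz
      exact (hss hz.1 hz.2).1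
    exact (hFanalytic i j).eqOn_zero_of_preconnected_of_frequently_eq_zero hconn hxD hfx
  intro z hz hzz
  ext i j
  exact hEntry i j hz
end

section
/- Let γ : ℂ* → ℂ* be a group homomorphism, λ ∈ ℂ, and set a = γ(q). Let A ∈ GL_n(ℂ) be given with a multiplicative Dunford decomposition A = A_s·A_u = A_u·A_s, where A_s = Q·diag(c₁,…,cₙ)·Q⁻¹ is invertible diagonalizable and A_u is unipotent; likewise B = B_s·B_u = B_u·B_s ∈ GL_p(ℂ) with B_s = R·diag(d₁,…,d_p)·R⁻¹ and B_u unipotent. Put Φ_A = (Q·diag(γ(c₁),…,γ(cₙ))·Q⁻¹)·A_u^λ and Φ_B = (R·diag(γ(d₁),…,γ(d_p))·R⁻¹)·B_u^λ. Let F be a p×n matrix of functions meromorphic on ℂ (analytic off a closed discrete set D) with F(qz)·A = B·F(z) whenever z, qz ∉ D. Then for every z₀ ∈ ℂ∖(D ∪ {0}) with a·z₀ ∉ D one has F(a·z₀)·Φ_A = Φ_B·F(z₀). (This is the naturality underlying Theorem 2.2.2.1: every pair (γ,λ) with γ(q)·z₀ = z₁ defines an element of the local Galois groupoid from the fibre functor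 at z₀ to the fibre functor at z₁.) -/
open Matrix
open scoped Classical

/-- The generalized binomial coefficient `C(λ,k) = λ(λ-1)⋯(λ-k+1)/k!`. -/
noncomputable def genBinom (l : ℂ) (k : ℕ) : ℂ :=
  (∏ i ∈ Finset.range k, (l - i)) / (k.factorial : ℂ)

/-- For a unipotent matrix `U`, the complex power
`U^λ = ∑_{k ≥ 0} C(λ,k) (U - I)^k`. -/
noncomputable def unipPow {n : ℕ} (U : Matrix (Fin n) (Fin n) ℂ) (l : ℂ) :
    Matrix (Fin n) (Fin n) ℂ :=
  ∑' k : ℕ, genBinom l k • (U - 1) ^ k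


lemma pow_eq_zero_of_le' {m : ℕ} {Z : Matrix (Fin m) (Fin m) ℂ} (hZ : Z ^ m = 0)
    {k : ℕ} (hk : m ≤ k) : Z ^ k = 0 := by
  have : Z ^ k = Z ^ m * Z ^ (k - m) := by rw [← pow_add]; congr 1; omega
  rw [this, hZ, Matrix.zero_mul]

variable {p n : ℕ}

noncomputable def lmulE (M : Matrix (Fin p) (Fin p) ℂ) :
    Module.End ℂ (Matrix (Fin p) (Fin n) ℂ) :=
  { toFun := fun W => M * W,
    map_add' := fun X Y => Matrix.mul_add M X Y,
    map_smul' := fun a X => Matrix.mul_smul M a X }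

noncomputable def rmulE (N : Matrix (Fin n) (Fin n) ℂ) :
    Module.End ℂ (Matrix (Fin p) (Fin n) ℂ) :=
  { toFun := fun W => W * N,
    map_add' := fun X Y => Matrix.add_mul X Y N,
    map_smul' := fun a X => Matrix.smul_mul a X N }

lemma lmulE_pow (M : Matrix (Fin p) (Fin p) ℂ) (k : ℕ) (W : Matrix (Fin p) (Fin n) ℂ) :
    ((lmulE M) ^ k) W = M ^ k * W := by
  induction k generalizing W with
  | zero => simp [Matrix.one_mul]
  | succ k ih =>
      rw [pow_succ, Module.End.mul_apply]
      show (lmulE M ^ k) (M * W) = M ^ (k + 1) * W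
      rw [ih, ← Matrix.mul_assoc, ← pow_succ]
lemma rmulE_pow (N : Matrix (Fin n) (Fin n) ℂ) (k : ℕ) (W : Matrix (Fin p) (Fin n) ℂ) :
    ((rmulE N) ^ k) W = W * N ^ k := by
  induction k generalizing W with
  | zero => simp [Matrix.mul_one]
  | succ k ih =>
      rw [pow_succ, Module.End.mul_apply]
      show (rmulE N ^ k) (W * N) = W * N ^ (k + 1)
      rw [ih, Matrix.mul_assoc, ← pow_succ']

lemma unip_rigid {M : Matrix (Fin p) (Fin p) ℂ} {N : Matrix (Fin n) (Fin n) ℂ}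
    (hM : (M - 1) ^ p = 0) (hN : (N - 1) ^ n = 0) {μ : ℂ} (hμ : μ ≠ 1)
    {W : Matrix (Fin p) (Fin n) ℂ} (hW : M * W = μ • (W * N)) : W = 0 := by
  set L : Module.End ℂ (Matrix (Fin p) (Fin n) ℂ) := lmulE (M - 1) with hLdef
  set R : Module.End ℂ (Matrix (Fin p) (Fin n) ℂ) := rmulE (N - 1) with hRdef
  have hLR : Commute (μ • R) (-L) := by
    have h : Commute R L := by
      refine LinearMap.ext fun W => ?_
      show ((M - 1) * W) * (N - 1) = (M - 1) * (W * (N - 1))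
      rw [Matrix.mul_assoc]
    exact ((h.smul_left μ).neg_right)
  set T : Module.End ℂ (Matrix (Fin p) (Fin n) ℂ) := μ • R + (-L) with hTdef
  have hTW : T W = (1 - μ) • W := by
    show μ • (W * (N - 1)) + -((M - 1) * W) = (1 - μ) • W
    have h1 : W * (N - 1) = W * N - W := by rw [Matrix.mul_sub, Matrix.mul_one]
    have h2 : (M - 1) * W = M * W - W := by rw [Matrix.sub_mul, Matrix.one_mul]
    rw [h1, h2, hW]
    module
  have hTm : ∀ m : ℕ, (T ^ m) W = ((1 - μ) ^ m) • W := by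
    intro m
    induction m with
    | zero => simp
    | succ m ih =>
        rw [pow_succ', Module.End.mul_apply, ih, LinearMap.map_smul, hTW, smul_smul, ← pow_succ]
  have hT0 : T ^ (n + p) = 0 := by
    rw [hTdef, Commute.add_pow hLR]
    refine Finset.sum_eq_zero (fun k hk => ?_)
    rcases le_or_gt n k with h | h
    · have hRk : R ^ k = 0 := by
        refine LinearMap.ext fun W => ?_
        rw [rmulE_pow, pow_eq_zero_of_le' hN h, Matrix.mul_zero]
        rfl
      rw [smul_pow, hRk, smul_zero, zero_mul, zero_mul]
    · have hpk : p ≤ n + p - k := by omega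
      have hLk : L ^ (n + p - k) = 0 := by
        refine LinearMap.ext fun W => ?_
        rw [lmulE_pow, pow_eq_zero_of_le' hM hpk, Matrix.zero_mul]
        rfl
      have hMneg : (-(M - 1)) ^ (n + p - k) = 0 := by
        rcases Nat.even_or_odd (n + p - k) with he | ho
        · rw [he.neg_pow, pow_eq_zero_of_le' hM hpk]
        · rw [ho.neg_pow, pow_eq_zero_of_le' hM hpk, neg_zero]
      have hnegL : (-L) ^ (n + p - k) = 0 := by
        have hLneg : (-L) = lmulE (-(M - 1)) := by
          refine LinearMap.ext fun W => ?_
          exact (Matrix.neg_mul _ _).symm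
        rw [hLneg]
        refine LinearMap.ext fun W => ?_
        rw [lmulE_pow, hMneg, Matrix.zero_mul]
        rfl
      rw [hnegL, mul_zero, zero_mul]
  have h0 := hTm (n + p)
  rw [hT0] at h0
  have hne : (1 - μ) ^ (n + p) ≠ 0 := pow_ne_zero _ (sub_ne_zero.mpr (Ne.symm hμ))
  have h0' : ((1 - μ) ^ (n + p)) • W = 0 := h0.symm
  exact (smul_eq_zero.mp h0').resolve_left hne

lemma unipPow_eq_sum {m : ℕ} (U : Matrix (Fin m) (Fin m) ℂ) (hU : (U - 1) ^ m = 0)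
    (l : ℂ) (K : ℕ) (hK : m ≤ K) :
    unipPow U l = ∑ k ∈ Finset.range K, genBinom l k • (U - 1) ^ k := by
  refine tsum_eq_sum (fun k hk => ?_)
  rw [pow_eq_zero_of_le' hU (le_trans hK (by simpa using hk)), smul_zero]

lemma conj_mul_pow {m : ℕ} (S T : Matrix (Fin m) (Fin m) ℂ)
    (hTS : T * S = 1) (hST : S * T = 1) (Z : Matrix (Fin m) (Fin m) ℂ) (k : ℕ) :
    (T * Z * S) ^ k = T * Z ^ k * S := by
  induction k with
  | zero => simpa using hTS.symm
  | succ k ih =>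
      rw [pow_succ, ih, pow_succ]
      calc T * Z ^ k * S * (T * Z * S) = T * Z ^ k * (S * T) * Z * S := by
            simp only [Matrix.mul_assoc]
      _ = T * (Z ^ k * Z) * S := by rw [hST]; simp only [Matrix.mul_one, Matrix.mul_assoc]

section keyconj
variable {p n : ℕ} {q : ℂˣ} {k : ℤ} {c : Fin n → ℂˣ} {d : Fin p → ℂˣ}
  {N : Matrix (Fin n) (Fin n) ℂ} {M : Matrix (Fin p) (Fin p) ℂ}
  {Y : Matrix (Fin p) (Fin n) ℂ}

variable (c d Y) in
/-- The component of `Y` supported where `d i = α * c j`. -/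
noncomputable def maskM (α : ℂ) : Matrix (Fin p) (Fin n) ℂ :=
  Matrix.of fun i j => if (d i : ℂ) = α * (c j : ℂ) then Y i j else 0

lemma commut_entry {m : ℕ} {e : Fin m → ℂˣ} {Z : Matrix (Fin m) (Fin m) ℂ}
    (hZ : Matrix.diagonal (fun i => (e i : ℂ)) * Z = Z * Matrix.diagonal (fun i => (e i : ℂ)))
    {i i' : Fin m} (hne : Z i i' ≠ 0) : (e i : ℂ) = e i' := by
  have h := congrFun (congrFun hZ i) i'
  rw [Matrix.diagonal_mul, Matrix.mul_diagonal] at h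
  by_contra hcon
  have h2 : ((e i : ℂ) - e i') * Z i i' = 0 := by linear_combination h
  rcases mul_eq_zero.mp h2 with h3 | h3
  · exact hcon (sub_eq_zero.mp h3)
  · exact hne h3

lemma mask_claim1
    (hNc : Matrix.diagonal (fun j => (c j : ℂ)) * N = N * Matrix.diagonal (fun j => (c j : ℂ)))
    (hMd : Matrix.diagonal (fun i => (d i : ℂ)) * M = M * Matrix.diagonal (fun i => (d i : ℂ)))
    (hY : Matrix.diagonal (fun i => (d i : ℂ)) * (M * Y)
        = ((q : ℂ) ^ k) • (Y * (Matrix.diagonal (fun j => (c j : ℂ)) * N)))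
    {α : ℂ} (hα : α ≠ 0) :
    M * maskM c d Y α = (((q : ℂ) ^ k) / α) • (maskM c d Y α * N) := by
  -- entrywise main equation
  have hmain : ∀ i j, (d i : ℂ) * (M * Y) i j = (q : ℂ) ^ k * ((Y * N) i j * (c j : ℂ)) := by
    intro i j
    have h := congrFun (congrFun hY i) j
    rw [Matrix.diagonal_mul] at h
    have h2 : (Y * (Matrix.diagonal (fun j => (c j : ℂ)) * N)) = (Y * N) * Matrix.diagonal (fun j => (c j : ℂ)) := by
      rw [hNc, ← Matrix.mul_assoc]
    rw [h2] at h
    simpa [Matrix.smul_apply, Matrix.mul_diagonal, smul_eq_mul] using h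
  have hA : ∀ i j, (M * maskM c d Y α) i j
      = if (d i : ℂ) = α * (c j : ℂ) then (M * Y) i j else 0 := by
    intro i j
    rw [Matrix.mul_apply]
    have : ∀ i', M i i' * maskM c d Y α i' j
        = if (d i : ℂ) = α * (c j : ℂ) then M i i' * Y i' j else 0 := by
      intro i'
      by_cases hM0 : M i i' = 0
      · simp [hM0]
      · have hdd := commut_entry hMd hM0
        simp only [maskM, Matrix.of_apply, hdd, mul_ite, mul_zero]
    rw [Finset.sum_congr rfl (fun i' _ => this i')]
    by_cases hc : (d i : ℂ) = α * (c j : ℂ) <;> simp [hc, Matrix.mul_apply]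
  have hB : ∀ i j, (maskM c d Y α * N) i j
      = if (d i : ℂ) = α * (c j : ℂ) then (Y * N) i j else 0 := by
    intro i j
    rw [Matrix.mul_apply]
    have : ∀ j', maskM c d Y α i j' * N j' j
        = if (d i : ℂ) = α * (c j : ℂ) then Y i j' * N j' j else 0 := by
      intro j'
      by_cases hN0 : N j' j = 0
      · simp [hN0]
      · have hcc := commut_entry hNc hN0
        simp only [maskM, Matrix.of_apply, hcc, ite_mul, zero_mul]
    rw [Finset.sum_congr rfl (fun j' _ => this j')]
    by_cases hc : (d i : ℂ) = α * (c j : ℂ) <;> simp [hc, Matrix.mul_apply]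
  ext i j
  rw [hA, Matrix.smul_apply, hB, smul_eq_mul]
  by_cases hc : (d i : ℂ) = α * (c j : ℂ)
  · rw [if_pos hc, if_pos hc]
    have hcj : (c j : ℂ) ≠ 0 := Units.ne_zero _
    have h := hmain i j
    rw [hc] at h
    have h2 : α * (M * Y) i j = (q : ℂ) ^ k * (Y * N) i j :=
      mul_right_cancel₀ hcj (by ring_nf; ring_nf at h; linear_combination h)
    field_simp
    linear_combination h2
  · simp [hc]
end keyconj

section keyconj2
variable {p n : ℕ} {q : ℂˣ} {k : ℤ} {c : Fin n → ℂˣ} {d : Fin p → ℂˣ}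
  {N : Matrix (Fin n) (Fin n) ℂ} {M : Matrix (Fin p) (Fin p) ℂ}
  {Y : Matrix (Fin p) (Fin n) ℂ}
  (hN : (N - 1) ^ n = 0) (hM : (M - 1) ^ p = 0)
  (hNc : Matrix.diagonal (fun j => (c j : ℂ)) * N = N * Matrix.diagonal (fun j => (c j : ℂ)))
  (hMd : Matrix.diagonal (fun i => (d i : ℂ)) * M = M * Matrix.diagonal (fun i => (d i : ℂ)))
  (hY : Matrix.diagonal (fun i => (d i : ℂ)) * (M * Y)
      = ((q : ℂ) ^ k) • (Y * (Matrix.diagonal (fun j => (c j : ℂ)) * N)))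

include hN hM hNc hMd hY in
lemma key_vanish : ∀ i j, (d i : ℂ) ≠ (q : ℂ) ^ k * (c j : ℂ) → Y i j = 0 := by
  intro i j hne
  set α : ℂ := (d i : ℂ) / (c j : ℂ) with hαdef
  have hcj : (c j : ℂ) ≠ 0 := Units.ne_zero _
  have hα : α ≠ 0 := div_ne_zero (Units.ne_zero _) hcj
  have hdc : α * (c j : ℂ) = (d i : ℂ) := by
    rw [hαdef, div_mul_cancel₀ _ hcj]
  have hμ : ((q : ℂ) ^ k) / α ≠ 1 := by
    intro h1
    have hqα : (q : ℂ) ^ k = α := by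
      rw [div_eq_one_iff_eq hα] at h1
      exact h1
    exact hne (by rw [hqα, hdc])
  have hmask := mask_claim1 hNc hMd hY hα
  have hzero : maskM c d Y α = 0 := unip_rigid hM hN hμ hmask
  have : maskM c d Y α i j = Y i j := by
    simp only [maskM, Matrix.of_apply, if_pos hdc.symm]
  rw [hzero] at this
  exact this.symm
end keyconj2

section keyconj3
variable {p n : ℕ} {q : ℂˣ} {k : ℤ} {c : Fin n → ℂˣ} {d : Fin p → ℂˣ}
  {N : Matrix (Fin n) (Fin n) ℂ} {M : Matrix (Fin p) (Fin p) ℂ}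
  {Y : Matrix (Fin p) (Fin n) ℂ}
  (hN : (N - 1) ^ n = 0) (hM : (M - 1) ^ p = 0)
  (hNc : Matrix.diagonal (fun j => (c j : ℂ)) * N = N * Matrix.diagonal (fun j => (c j : ℂ)))
  (hMd : Matrix.diagonal (fun i => (d i : ℂ)) * M = M * Matrix.diagonal (fun i => (d i : ℂ)))
  (hY : Matrix.diagonal (fun i => (d i : ℂ)) * (M * Y)
      = ((q : ℂ) ^ k) • (Y * (Matrix.diagonal (fun j => (c j : ℂ)) * N)))

include hN hM hNc hMd hY in
lemma key_intertwine : M * Y = Y * N := by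
  have hq0 : ((q : ℂ) ^ k) ≠ 0 := zpow_ne_zero _ (Units.ne_zero q)
  have hmaskY : maskM c d Y ((q : ℂ) ^ k) = Y := by
    ext i j
    simp only [maskM, Matrix.of_apply]
    by_cases hc : (d i : ℂ) = (q : ℂ) ^ k * (c j : ℂ)
    · rw [if_pos hc]
    · rw [if_neg hc, key_vanish hN hM hNc hMd hY i j hc]
  have := mask_claim1 hNc hMd hY hq0
  rw [hmaskY, div_self hq0, one_smul] at this
  exact this

include hN hM hNc hMd hY in
lemma key_diag (γ : ℂˣ →* ℂˣ) :
    Matrix.diagonal (fun i => (γ (d i) : ℂ)) * Y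
      = ((γ q : ℂ) ^ k) • (Y * Matrix.diagonal (fun j => (γ (c j) : ℂ))) := by
  ext i j
  rw [Matrix.diagonal_mul, Matrix.smul_apply, Matrix.mul_diagonal, smul_eq_mul]
  by_cases hY0 : Y i j = 0
  · rw [hY0]; ring
  · have hd : (d i : ℂ) = (q : ℂ) ^ k * (c j : ℂ) := by
      by_contra hne
      exact hY0 (key_vanish hN hM hNc hMd hY i j hne)
    have hunits : d i = q ^ k * c j := by
      ext
      rw [Units.val_mul, Units.val_zpow_eq_zpow_val]
      exact hd
    have : (γ (d i) : ℂ) = (γ q : ℂ) ^ k * (γ (c j) : ℂ) := by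
      rw [hunits, _root_.map_mul, _root_.map_zpow γ, Units.val_mul, Units.val_zpow_eq_zpow_val]
    rw [this]; ring

lemma key_unip_sum (hMN : M * Y = Y * N) (l : ℂ) (K : ℕ) :
    (∑ s ∈ Finset.range K, genBinom l s • (M - 1) ^ s) * Y
      = Y * ∑ s ∈ Finset.range K, genBinom l s • (N - 1) ^ s := by
  have hpow : ∀ s : ℕ, (M - 1) ^ s * Y = Y * (N - 1) ^ s := by
    intro s
    induction s with
    | zero => simp [Matrix.one_mul, Matrix.mul_one]
    | succ s ih =>
        have h1 : (M - 1) * Y = Y * (N - 1) := by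
          rw [Matrix.sub_mul, Matrix.one_mul, Matrix.mul_sub, Matrix.mul_one, hMN]
        calc (M - 1) ^ (s + 1) * Y = (M - 1) ^ s * ((M - 1) * Y) := by
              rw [pow_succ, Matrix.mul_assoc]
        _ = (M - 1) ^ s * Y * (N - 1) := by rw [h1, Matrix.mul_assoc]
        _ = Y * (N - 1) ^ s * (N - 1) := by rw [ih]
        _ = Y * (N - 1) ^ (s + 1) := by rw [Matrix.mul_assoc, ← pow_succ]
              
  rw [Matrix.sum_mul, Matrix.mul_sum]
  refine Finset.sum_congr rfl (fun s _ => ?_)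
  rw [Matrix.smul_mul, Matrix.mul_smul, hpow]
end keyconj3

section main
variable {n p : ℕ} (q : ℂˣ) (γ : ℂˣ →* ℂˣ) (l : ℂ)
    (A As Au Q : Matrix (Fin n) (Fin n) ℂ) (c : Fin n → ℂˣ)
    (B Bs Bu R : Matrix (Fin p) (Fin p) ℂ) (d : Fin p → ℂˣ)

/-- Master algebraic lemma: eigen-coefficients of the morphism intertwine the
Galoisian automorphisms. -/
lemma key_main
    (hQ : IsUnit Q.det) (hAs : As = Q * Matrix.diagonal (fun i => (c i : ℂ)) * Q⁻¹)
    (hAu : (Au - 1) ^ n = 0)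
    (hAcomm : As * Au = Au * As)
    (hR : IsUnit R.det) (hBs : Bs = R * Matrix.diagonal (fun j => (d j : ℂ)) * R⁻¹)
    (hBu : (Bu - 1) ^ p = 0)
    (hBcomm : Bs * Bu = Bu * Bs)
    (k : ℤ) (X : Matrix (Fin p) (Fin n) ℂ)
    (hX : (Bs * Bu) * X = ((q : ℂ) ^ k) • (X * (As * Au))) :
    (((R * Matrix.diagonal (fun j => (γ (d j) : ℂ)) * R⁻¹) * unipPow Bu l) * X
      = ((γ q : ℂ) ^ k) • (X * ((Q * Matrix.diagonal (fun i => (γ (c i) : ℂ)) * Q⁻¹) * unipPow Au l)))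
    ∧ (X ≠ 0 → ∃ i j, (d i : ℂ) = (q : ℂ) ^ k * (c j : ℂ)) := by
  have hQl : Q⁻¹ * Q = 1 := Matrix.nonsing_inv_mul Q hQ
  have hQr : Q * Q⁻¹ = 1 := Matrix.mul_nonsing_inv Q hQ
  have hRl : R⁻¹ * R = 1 := Matrix.nonsing_inv_mul R hR
  have hRr : R * R⁻¹ = 1 := Matrix.mul_nonsing_inv R hR
  set Dc : Matrix (Fin n) (Fin n) ℂ := Matrix.diagonal (fun i => (c i : ℂ)) with hDc
  set Dd : Matrix (Fin p) (Fin p) ℂ := Matrix.diagonal (fun j => (d j : ℂ)) with hDd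
  set N : Matrix (Fin n) (Fin n) ℂ := Q⁻¹ * Au * Q with hNdef
  set M : Matrix (Fin p) (Fin p) ℂ := R⁻¹ * Bu * R with hMdef
  set Y : Matrix (Fin p) (Fin n) ℂ := R⁻¹ * X * Q with hYdef
  have hXY : X = R * Y * Q⁻¹ := by
    rw [hYdef]
    simp only [Matrix.mul_assoc]
    rw [Matrix.mul_nonsing_inv_cancel_left _ _ hR]
    rw [show Q * Q⁻¹ = 1 from hQr, Matrix.mul_one]
  have hNm1 : N - 1 = Q⁻¹ * (Au - 1) * Q := by
    rw [hNdef, Matrix.mul_sub, Matrix.sub_mul, Matrix.mul_one, hQl]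
  have hMm1 : M - 1 = R⁻¹ * (Bu - 1) * R := by
    rw [hMdef, Matrix.mul_sub, Matrix.sub_mul, Matrix.mul_one, hRl]
  have hN : (N - 1) ^ n = 0 := by
    rw [hNm1, conj_mul_pow Q Q⁻¹ hQl hQr, hAu, Matrix.mul_zero, Matrix.zero_mul]
  have hM : (M - 1) ^ p = 0 := by
    rw [hMm1, conj_mul_pow R R⁻¹ hRl hRr, hBu, Matrix.mul_zero, Matrix.zero_mul]
  have hNc : Dc * N = N * Dc := by
    have h := congrArg (fun Z => Q⁻¹ * Z * Q) hAcomm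
    simp only [hAs, ← hDc] at h
    simp only [Matrix.mul_assoc] at h
    rw [Matrix.nonsing_inv_mul_cancel_left _ _ hQ] at h
    rw [show Q⁻¹ * Q = 1 from hQl, Matrix.mul_one] at h
    rw [hNdef]
    simp only [Matrix.mul_assoc]
    exact h
  have hMd : Dd * M = M * Dd := by
    have h := congrArg (fun Z => R⁻¹ * Z * R) hBcomm
    simp only [hBs, ← hDd] at h
    simp only [Matrix.mul_assoc] at h
    rw [Matrix.nonsing_inv_mul_cancel_left _ _ hR] at h
    rw [show R⁻¹ * R = 1 from hRl, Matrix.mul_one] at h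
    rw [hMdef]
    simp only [Matrix.mul_assoc]
    exact h
  have hY : Dd * (M * Y) = ((q : ℂ) ^ k) • (Y * (Dc * N)) := by
    have h := congrArg (fun Z => R⁻¹ * Z * Q) hX
    simp only [hAs, hBs, ← hDc, ← hDd] at h
    simp only [Matrix.mul_assoc, Matrix.smul_mul, Matrix.mul_smul] at h
    rw [Matrix.nonsing_inv_mul_cancel_left _ _ hR] at h
    -- h : Dd * (R⁻¹ * (Bu * (X * Q))) = q^k • (R⁻¹ * (X * (Q * (Dc * (Q⁻¹ * (Au * Q))))))
    rw [hNdef, hMdef, hYdef]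
    simp only [Matrix.mul_assoc, Matrix.smul_mul, Matrix.mul_smul]
    rw [show R * (R⁻¹ * (X * Q)) = X * Q from Matrix.mul_nonsing_inv_cancel_left _ _ hR]
    exact h
  constructor
  · -- main identity
    have hint : M * Y = Y * N := key_intertwine hN hM hNc hMd hY
    have hdiag := key_diag hN hM hNc hMd hY γ
    set K := n + p with hK
    set UN : Matrix (Fin n) (Fin n) ℂ := ∑ s ∈ Finset.range K, genBinom l s • (N - 1) ^ s with hUN
    set UM : Matrix (Fin p) (Fin p) ℂ := ∑ s ∈ Finset.range K, genBinom l s • (M - 1) ^ s with hUM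
    have hsum : UM * Y = Y * UN := key_unip_sum hint l K
    have hupA : unipPow Au l = Q * UN * Q⁻¹ := by
      rw [unipPow_eq_sum Au hAu l K (by omega), hUN, Matrix.mul_sum, Matrix.sum_mul]
      refine Finset.sum_congr rfl (fun s _ => ?_)
      rw [Matrix.mul_smul, Matrix.smul_mul]
      congr 1
      rw [hNm1, conj_mul_pow Q Q⁻¹ hQl hQr]
      simp only [Matrix.mul_assoc]
      rw [Matrix.mul_nonsing_inv_cancel_left _ _ hQ]
      rw [show Q * Q⁻¹ = 1 from hQr, Matrix.mul_one]
    have hupB : unipPow Bu l = R * UM * R⁻¹ := by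
      rw [unipPow_eq_sum Bu hBu l K (by omega), hUM, Matrix.mul_sum, Matrix.sum_mul]
      refine Finset.sum_congr rfl (fun s _ => ?_)
      rw [Matrix.mul_smul, Matrix.smul_mul]
      congr 1
      rw [hMm1, conj_mul_pow R R⁻¹ hRl hRr]
      simp only [Matrix.mul_assoc]
      rw [Matrix.mul_nonsing_inv_cancel_left _ _ hR]
      rw [show R * R⁻¹ = 1 from hRr, Matrix.mul_one]
    set Dcg : Matrix (Fin n) (Fin n) ℂ := Matrix.diagonal (fun i => (γ (c i) : ℂ)) with hDcg
    set Ddg : Matrix (Fin p) (Fin p) ℂ := Matrix.diagonal (fun j => (γ (d j) : ℂ)) with hDdg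
    rw [hupA, hupB, hXY]
    calc R * Ddg * R⁻¹ * (R * UM * R⁻¹) * (R * Y * Q⁻¹)
        = R * (Ddg * (UM * Y)) * Q⁻¹ := by
          simp only [Matrix.mul_assoc]
          rw [Matrix.nonsing_inv_mul_cancel_left _ _ hR,
              Matrix.nonsing_inv_mul_cancel_left _ _ hR]
    _ = R * ((Ddg * Y) * UN) * Q⁻¹ := by
          rw [hsum]
          simp only [Matrix.mul_assoc]
    _ = ((γ q : ℂ) ^ k) • (R * Y * Q⁻¹ * (Q * Dcg * Q⁻¹ * (Q * UN * Q⁻¹))) := by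
          rw [hdiag, Matrix.smul_mul, Matrix.mul_smul, Matrix.smul_mul]
          congr 1
          simp only [Matrix.mul_assoc]
          rw [Matrix.nonsing_inv_mul_cancel_left _ _ hQ,
              Matrix.nonsing_inv_mul_cancel_left _ _ hQ]
  · -- vanishing criterion
    intro hX0
    by_contra hcon
    push_neg at hcon
    have hY0 : Y = 0 := by
      ext i j
      exact key_vanish hN hM hNc hMd hY i j (hcon i j)
    exact hX0 (by rw [hXY, hY0, Matrix.mul_zero, Matrix.zero_mul])
end main


attribute [local instance] Matrix.normedAddCommGroup Matrix.normedSpace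

/-- In a closed discrete subset of `ℂ`, points are isolated. -/
lemma discrete_isolated {D : Set ℂ} (hDc : IsClosed D) (hDd : DiscreteTopology D) (w : ℂ) :
    ∃ ε > 0, ∀ z ∈ D, dist z w < ε → z = w := by
  by_cases hw : w ∈ D
  · have hopen : IsOpen ({⟨w, hw⟩} : Set D) := isOpen_discrete _
    rw [isOpen_induced_iff] at hopen
    obtain ⟨t, ht, htw⟩ := hopen
    have hwt : w ∈ t := by
      have : (⟨w, hw⟩ : D) ∈ (Subtype.val ⁻¹' t : Set D) := by
        rw [htw]; exact rfl
      exact this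
    obtain ⟨ε, hε, hball⟩ := Metric.isOpen_iff.mp ht w hwt
    refine ⟨ε, hε, fun z hz hdz => ?_⟩
    have : (⟨z, hz⟩ : D) ∈ (Subtype.val ⁻¹' t : Set D) :=
      hball (by simpa [Metric.mem_ball] using hdz)
    rw [htw] at this
    exact congrArg Subtype.val this
  · obtain ⟨ε, hε, hball⟩ := Metric.isOpen_iff.mp hDc.isOpen_compl w hw
    exact ⟨ε, hε, fun z hz hdz =>
      absurd (hball (by simpa [Metric.mem_ball] using hdz)) (by simpa using hz)⟩

section calc_lemmas
variable {E : Type*} [NormedAddCommGroup E] [NormedSpace ℂ E] [CompleteSpace E]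

lemma iteratedDeriv_clm_comp (T : E →L[ℂ] E) {s : Set ℂ} (hs : IsOpen s) :
    ∀ (m : ℕ) (f : ℂ → E), AnalyticOnNhd ℂ f s → ∀ x ∈ s,
      iteratedDeriv m (fun z => T (f z)) x = T (iteratedDeriv m f x) := by
  intro m
  induction m with
  | zero => intro f hf x hx; simp
  | succ m ih =>
      intro f hf x hx
      rw [iteratedDeriv_succ', iteratedDeriv_succ']
      have heq : Set.EqOn (deriv (fun z => T (f z))) (fun z => T (deriv f z)) s := by
        intro y hy
        exact (T.hasFDerivAt.comp_hasDerivAt y (hf y hy).differentiableAt.hasDerivAt).deriv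
      rw [heq.iteratedDeriv_of_isOpen hs m hx]
      exact ih (fun z => deriv f z) (fun y hy => (hf.deriv y hy)) x hx

lemma iteratedDeriv_comp_const_mul' {c : ℂ} {s : Set ℂ} (hs : IsOpen s) :
    ∀ (m : ℕ) (f : ℂ → E), AnalyticOnNhd ℂ f s → ∀ x, c * x ∈ s →
      iteratedDeriv m (fun z => f (c * z)) x = c ^ m • iteratedDeriv m f (c * x) := by
  intro m
  induction m with
  | zero => intro f hf x hx; simp
  | succ m ih =>
      intro f hf x hx
      have hs' : IsOpen ((fun z => c * z) ⁻¹' s) := hs.preimage (by continuity)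
      rw [iteratedDeriv_succ', iteratedDeriv_succ']
      have heq : Set.EqOn (deriv (fun z => f (c * z)))
          (fun z => c • deriv f (c * z)) ((fun z => c * z) ⁻¹' s) := by
        intro y hy
        have hdf : HasDerivAt f (deriv f (c * y)) (c * y) :=
          (hf _ hy).differentiableAt.hasDerivAt
        have hg : HasDerivAt (fun z : ℂ => c * z) c y := by
          simpa using (hasDerivAt_id y).const_mul c
        have h1 : HasDerivAt (fun z => f (c * z)) (c • deriv f (c * y)) y :=
          HasDerivAt.scomp y hdf hg
        exact h1.deriv
      rw [heq.iteratedDeriv_of_isOpen hs' m (by exact hx)]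
      have hder : AnalyticOnNhd ℂ (fun z => c • deriv f z) s :=
        fun y hy => analyticAt_const.smul (hf.deriv y hy)
      have h2 := ih (fun z => c • deriv f z) hder x hx
      rw [h2]
      have h3 := iteratedDeriv_clm_comp (c • (ContinuousLinearMap.id ℂ E)) hs m (deriv f)
        hf.deriv (c * x) hx
      simp only [ContinuousLinearMap.smul_apply, ContinuousLinearMap.id_apply] at h3
      rw [h3, smul_smul, ← pow_succ]
end calc_lemmas

set_option maxHeartbeats 1600000 in
/-- Naturality of the Galoisian automorphisms `(γ, λ)`: for a meromorphic
morphism `F` between flat systems `A` and `B` (with Dunford decompositions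
`A = A_s A_u`, `B = B_s B_u`), and `a = γ(q)`, one has
`F(a z₀) Φ_A = Φ_B F(z₀)` where `Φ_A = γ(A_s) A_u^λ`, `Φ_B = γ(B_s) B_u^λ`. -/
theorem galois_groupoid_naturality
    (q : ℂˣ) (hq : 1 < ‖(q : ℂ)‖)
    (γ : ℂˣ →* ℂˣ) (l : ℂ) {n p : ℕ}
    (A As Au Q : Matrix (Fin n) (Fin n) ℂ) (c : Fin n → ℂˣ)
    (B Bs Bu R : Matrix (Fin p) (Fin p) ℂ) (d : Fin p → ℂˣ)
    (hQ : IsUnit Q.det) (hAs : As = Q * Matrix.diagonal (fun i => (c i : ℂ)) * Q⁻¹)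
    (hAu : (Au - 1) ^ n = 0)
    (hAdec : A = As * Au) (hAcomm : As * Au = Au * As)
    (hR : IsUnit R.det) (hBs : Bs = R * Matrix.diagonal (fun j => (d j : ℂ)) * R⁻¹)
    (hBu : (Bu - 1) ^ p = 0)
    (hBdec : B = Bs * Bu) (hBcomm : Bs * Bu = Bu * Bs)
    (F : ℂ → Matrix (Fin p) (Fin n) ℂ) (D : Set ℂ)
    (hDclosed : IsClosed D) (hDdiscrete : DiscreteTopology D)
    (hFanalytic : ∀ i j, AnalyticOnNhd ℂ (fun z => F z i j) Dᶜ)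
    (hFmero : ∀ e ∈ D, ∀ i j, MeromorphicAt (fun z => F z i j) e)
    (hFeq : ∀ z : ℂ, z ∉ D → (q : ℂ) * z ∉ D → F ((q : ℂ) * z) * A = B * F z) :
    ∀ z₀ : ℂ, z₀ ∉ D → z₀ ≠ 0 → (γ q : ℂ) * z₀ ∉ D →
      F ((γ q : ℂ) * z₀) *
          ((Q * Matrix.diagonal (fun i => (γ (c i) : ℂ)) * Q⁻¹) * unipPow Au l) =
        ((R * Matrix.diagonal (fun j => (γ (d j) : ℂ)) * R⁻¹) * unipPow Bu l) *
          F z₀ := by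
  intro z₀ hz₀D hz₀0 haz₀
  have hq0 : (q : ℂ) ≠ 0 := Units.ne_zero q
  have ha0 : (γ q : ℂ) ≠ 0 := Units.ne_zero _
  have habs : (0 : ℝ) < ‖(q : ℂ)‖ := lt_trans zero_lt_one hq
  -- punctured neighbourhood of 0 avoiding D and q⁻¹ D
  obtain ⟨ε₁, hε₁, hiso⟩ := discrete_isolated hDclosed hDdiscrete 0
  set ε : ℝ := min ε₁ (ε₁ / ‖(q : ℂ)‖) with hε
  have hεpos : 0 < ε := lt_min hε₁ (div_pos hε₁ habs)
  have hpunc : ∀ z : ℂ, z ≠ 0 → ‖z‖ < ε → z ∉ D ∧ (q : ℂ) * z ∉ D := by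
    intro z hz hzε
    constructor
    · intro hzD
      exact hz (hiso z hzD (by
        rw [Complex.dist_eq, sub_zero]
        exact lt_of_lt_of_le hzε (min_le_left _ _)))
    · intro hzD
      apply hz
      have hq0' : (q : ℂ) * z = 0 := hiso _ hzD (by
        rw [Complex.dist_eq, sub_zero, norm_mul]
        calc ‖(q : ℂ)‖ * ‖z‖
            < ‖(q : ℂ)‖ * (ε₁ / ‖(q : ℂ)‖) :=
              mul_lt_mul_of_pos_left (lt_of_lt_of_le hzε (min_le_right _ _)) habs
        _ = ε₁ := mul_div_cancel₀ _ (ne_of_gt habs))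
      rcases mul_eq_zero.mp hq0' with h | h
      · exact absurd h hq0
      · exact h
  -- meromorphy at 0 and the pole-killing exponent
  have hmero0 : ∀ ij : Fin p × Fin n, ∃ m : ℕ,
      AnalyticAt ℂ (fun z => (z - 0) ^ m • F z ij.1 ij.2) 0 := by
    intro ij
    by_cases h0 : (0 : ℂ) ∈ D
    · exact hFmero 0 h0 ij.1 ij.2
    · exact (hFanalytic ij.1 ij.2 0 h0).meromorphicAt
  choose nn hnn using hmero0
  set N₀ : ℕ := 1 + Finset.univ.sup nn with hN₀
  have hN₀pos : 1 ≤ N₀ := by rw [hN₀]; omega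
  set h : ℂ → Matrix (Fin p) (Fin n) ℂ := fun z => (z ^ N₀ : ℂ) • F z with hh
  have hf : ∀ i j, AnalyticAt ℂ (fun z => h z i j) 0 := by
    intro i j
    have h1 := hnn (i, j)
    have h2 : AnalyticAt ℂ (fun z => z ^ (nn (i, j)) * F z i j) 0 := by
      have he : (fun z : ℂ => (z - 0) ^ (nn (i, j)) • F z i j)
          = fun z => z ^ (nn (i, j)) * F z i j := by
        funext z; simp [smul_eq_mul]
      rwa [he] at h1
    have h3 : AnalyticAt ℂ (fun z => z ^ (N₀ - nn (i, j)) * (z ^ (nn (i, j)) * F z i j)) 0 :=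
      (analyticAt_id.pow _).mul h2
    have h4 : (fun z : ℂ => z ^ (N₀ - nn (i, j)) * (z ^ nn (i, j) * F z i j))
        = fun z => z ^ N₀ * F z i j := by
      funext z
      rw [← mul_assoc, ← pow_add]
      congr 2
      have hle : nn (i, j) ≤ Finset.univ.sup nn := Finset.le_sup (Finset.mem_univ _)
      omega
    rw [h4] at h3
    have h5 : (fun z => h z i j) = fun z => z ^ N₀ * F z i j := by
      funext z; rw [hh]; simp [Matrix.smul_apply, smul_eq_mul]
    rwa [h5]
  have hh0 : AnalyticAt ℂ h 0 := AnalyticAt.pi (fun i => AnalyticAt.pi (fun j => hf i j))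
  -- open set where h is analytic
  obtain ⟨δ₂, hδ₂, hball₂⟩ := Metric.mem_nhds_iff.mp hh0.eventually_analyticAt
  set s : Set ℂ := Metric.ball (0 : ℂ) δ₂ with hsdef
  have hsopen : IsOpen s := Metric.isOpen_ball
  have hhs : AnalyticOnNhd ℂ h s := fun y hy => hball₂ hy
  have h0s : (0 : ℂ) ∈ s := Metric.mem_ball_self hδ₂
  -- the two continuous linear maps
  set RA : Matrix (Fin p) (Fin n) ℂ →L[ℂ] Matrix (Fin p) (Fin n) ℂ :=
    LinearMap.toContinuousLinearMap
      { toFun := fun X => X * A,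
        map_add' := fun X Y => Matrix.add_mul X Y A,
        map_smul' := fun a X => Matrix.smul_mul a X A } with hRAdef
  set LB : Matrix (Fin p) (Fin n) ℂ →L[ℂ] Matrix (Fin p) (Fin n) ℂ :=
    LinearMap.toContinuousLinearMap
      { toFun := fun X => B * X,
        map_add' := fun X Y => Matrix.mul_add B X Y,
        map_smul' := fun a X => Matrix.mul_smul B a X } with hLBdef
  have hRAapp : ∀ X, RA X = X * A := fun X => rfl
  have hLBapp : ∀ X, (((q : ℂ) ^ N₀) • LB) X = ((q : ℂ) ^ N₀) • (B * X) := fun X => rfl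
  -- the functional equation for h near 0
  have heqF : ∀ z : ℂ, ‖z‖ < ε →
      RA (h ((q : ℂ) * z)) = (((q : ℂ) ^ N₀) • LB) (h z) := by
    intro z hz
    rw [hRAapp, hLBapp]
    by_cases hz0 : z = 0
    · subst hz0
      have hzero : h 0 = 0 := by
        rw [hh]; simp only
        rw [zero_pow (by omega), zero_smul]
      rw [mul_zero, hzero, Matrix.zero_mul, Matrix.mul_zero, smul_zero]
    · obtain ⟨hzD, hqzD⟩ := hpunc z hz0 hz
      have hFe := hFeq z hzD hqzD
      rw [hh]; simp only
      rw [Matrix.smul_mul, hFe, mul_pow, Matrix.mul_smul, smul_smul]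
  -- coefficient relations
  set Hm : ℕ → Matrix (Fin p) (Fin n) ℂ := fun m => iteratedDeriv m h 0 with hHmdef
  have hrel : ∀ m : ℕ, ((q : ℂ) ^ m) • (Hm m * A) = ((q : ℂ) ^ N₀) • (B * Hm m) := by
    intro m
    have hev2 : (fun z => RA (h ((q : ℂ) * z))) =ᶠ[nhds 0]
        (fun z => (((q : ℂ) ^ N₀) • LB) (h z)) := by
      filter_upwards [Metric.ball_mem_nhds (0 : ℂ) hεpos] with z hz
      exact heqF z (by simpa [Complex.dist_eq] using hz)
    have hid := hev2.iteratedDeriv_eq m (x := 0)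
    have hcomp : AnalyticOnNhd ℂ (fun z => h ((q : ℂ) * z)) ((fun z => (q : ℂ) * z) ⁻¹' s) := by
      intro y hy
      exact (hhs _ hy).comp (analyticAt_const.mul analyticAt_id)
    have hL : iteratedDeriv m (fun z => RA (h ((q : ℂ) * z))) 0
        = RA (iteratedDeriv m (fun z => h ((q : ℂ) * z)) 0) :=
      iteratedDeriv_clm_comp RA (hsopen.preimage (by continuity)) m _ hcomp 0
        (by simpa using h0s)
    have hscale : iteratedDeriv m (fun z => h ((q : ℂ) * z)) 0
        = ((q : ℂ) ^ m) • iteratedDeriv m h ((q : ℂ) * 0) :=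
      iteratedDeriv_comp_const_mul' hsopen m h hhs 0 (by simpa using h0s)
    rw [mul_zero] at hscale
    have hRside : iteratedDeriv m (fun z => (((q : ℂ) ^ N₀) • LB) (h z)) 0
        = (((q : ℂ) ^ N₀) • LB) (iteratedDeriv m h 0) :=
      iteratedDeriv_clm_comp _ hsopen m h hhs 0 h0s
    rw [hL, hscale, hRside, ContinuousLinearMap.map_smul] at hid
    calc ((q : ℂ) ^ m) • (Hm m * A) = ((q : ℂ) ^ m) • RA (Hm m) := by rw [hRAapp]
    _ = (((q : ℂ) ^ N₀) • LB) (Hm m) := hid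
    _ = ((q : ℂ) ^ N₀) • (B * Hm m) := hLBapp _
  set Cm : ℕ → Matrix (Fin p) (Fin n) ℂ := fun m => ((m.factorial : ℂ))⁻¹ • Hm m with hCmdef
  have hqN : ((q : ℂ) ^ N₀) ≠ 0 := pow_ne_zero _ hq0
  have hBH : ∀ m : ℕ, B * Hm m = ((q : ℂ) ^ ((m : ℤ) - N₀)) • (Hm m * A) := by
    intro m
    rw [zpow_sub₀ hq0, zpow_natCast, zpow_natCast]
    calc B * Hm m = ((q : ℂ) ^ N₀)⁻¹ • (((q : ℂ) ^ N₀) • (B * Hm m)) := by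
          rw [smul_smul, inv_mul_cancel₀ hqN, one_smul]
    _ = ((q : ℂ) ^ N₀)⁻¹ • (((q : ℂ) ^ m) • (Hm m * A)) := by rw [hrel m]
    _ = ((q : ℂ) ^ m / (q : ℂ) ^ N₀) • (Hm m * A) := by
          rw [smul_smul]; congr 1; field_simp
  have hBC : ∀ m : ℕ, B * Cm m = ((q : ℂ) ^ ((m : ℤ) - N₀)) • (Cm m * A) := by
    intro m
    rw [hCmdef]; simp only
    calc B * ((m.factorial : ℂ)⁻¹ • Hm m) = (m.factorial : ℂ)⁻¹ • (B * Hm m) :=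
          Matrix.mul_smul _ _ _
    _ = (m.factorial : ℂ)⁻¹ • (((q : ℂ) ^ ((m : ℤ) - N₀)) • (Hm m * A)) := by rw [hBH m]
    _ = ((q : ℂ) ^ ((m : ℤ) - N₀)) • (((m.factorial : ℂ)⁻¹ • Hm m) * A) := by
          rw [smul_comm, Matrix.smul_mul]
  have hkey : ∀ m : ℕ,
      (((R * Matrix.diagonal (fun j => (γ (d j) : ℂ)) * R⁻¹) * unipPow Bu l) * Cm m
        = ((γ q : ℂ) ^ ((m : ℤ) - N₀)) •
            (Cm m * ((Q * Matrix.diagonal (fun i => (γ (c i) : ℂ)) * Q⁻¹) * unipPow Au l)))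
      ∧ (Cm m ≠ 0 → ∃ i j, (d i : ℂ) = (q : ℂ) ^ ((m : ℤ) - N₀) * (c j : ℂ)) := by
    intro m
    refine key_main (q := q) (γ := γ) (l := l) (As := As) (Au := Au) (Q := Q) (c := c)
      (Bs := Bs) (Bu := Bu) (R := R) (d := d) hQ hAs hAu hAcomm hR hBs hBu hBcomm
      ((m : ℤ) - N₀) (Cm m) ?_
    rw [← hBdec, ← hAdec]
    exact hBC m
  -- finiteness of the support
  have hfin : Set.Finite {m : ℕ | Cm m ≠ 0} := by
    have hsub : {m : ℕ | Cm m ≠ 0} ⊆ ⋃ ij : Fin p × Fin n,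
        {m : ℕ | (d ij.1 : ℂ) = (q : ℂ) ^ ((m : ℤ) - N₀) * (c ij.2 : ℂ)} := by
      intro m hm
      obtain ⟨i, j, hij⟩ := (hkey m).2 hm
      exact Set.mem_iUnion.mpr ⟨(i, j), hij⟩
    refine Set.Finite.subset (Set.finite_iUnion (fun ij => Set.Subsingleton.finite ?_)) hsub
    intro m₁ h₁ m₂ h₂
    simp only [Set.mem_setOf_eq] at h₁ h₂
    have hcj : (c ij.2 : ℂ) ≠ 0 := Units.ne_zero _
    have hqq : (q : ℂ) ^ ((m₁ : ℤ) - N₀) = (q : ℂ) ^ ((m₂ : ℤ) - N₀) :=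
      mul_right_cancel₀ hcj (h₁.symm.trans h₂)
    have h3 := congrArg norm hqq
    rw [norm_zpow, norm_zpow] at h3
    have h4 : ((m₁ : ℤ) - N₀) = ((m₂ : ℤ) - N₀) :=
      zpow_right_injective₀ habs (ne_of_gt hq) h3
    omega
  set SF : Finset ℕ := hfin.toFinset with hSFdef
  -- power series representation near 0
  obtain ⟨P, hP⟩ := hh0
  obtain ⟨r, hr⟩ := hP
  have hfac : ∀ m : ℕ, P m (fun _ => (1 : ℂ)) = Cm m := by
    intro m
    have h1 := hr.factorial_smul (1 : ℂ) m
    have h2 : iteratedFDeriv ℂ m h 0 (fun _ => (1 : ℂ)) = Hm m :=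
      iteratedDeriv_eq_iteratedFDeriv.symm
    rw [h2] at h1
    have h3 : ((m.factorial : ℂ)) • P m (fun _ => (1 : ℂ)) = Hm m := by
      rw [Nat.cast_smul_eq_nsmul]; exact h1
    rw [hCmdef]; simp only
    rw [← h3, smul_smul, inv_mul_cancel₀
      (by exact_mod_cast Nat.factorial_ne_zero m), one_smul]
  obtain ⟨δ₃, hδ₃, hball₃⟩ := Metric.mem_nhds_iff.mp (Metric.eball_mem_nhds (0 : ℂ) hr.r_pos)
  have hrep : ∀ z : ℂ, ‖z‖ < δ₃ → h z = ∑ m ∈ SF, z ^ m • Cm m := by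
    intro z hz
    have hzball : z ∈ Metric.eball (0 : ℂ) r := hball₃ (by simpa [Complex.dist_eq] using hz)
    have hterm : ∀ m : ℕ, P m (fun _ => z) = z ^ m • Cm m := by
      intro m
      have hms := (P m).map_smul_univ (fun _ => z) (fun _ => (1 : ℂ))
      simp only [smul_eq_mul, mul_one, Finset.prod_const, Finset.card_univ,
        Fintype.card_fin] at hms
      rw [hms, hfac m]
    have hsum2 : HasSum (fun m => z ^ m • Cm m) (h z) := by
      have hhs2 := hr.hasSum hzball
      rw [zero_add] at hhs2
      exact (funext hterm : (fun m => P m (fun _ => z)) = _) ▸ hhs2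
    have hfin2 : HasSum (fun m => z ^ m • Cm m) (∑ m ∈ SF, z ^ m • Cm m) := by
      apply hasSum_sum_of_ne_finset_zero
      intro m hm
      have hC0 : Cm m = 0 := by
        by_contra hne
        exact hm (hfin.mem_toFinset.mpr hne)
      rw [hC0, smul_zero]
    exact hsum2.unique hfin2
  -- the global Laurent-polynomial function g
  set g : ℂ → Matrix (Fin p) (Fin n) ℂ :=
    fun z => ((z ^ N₀ : ℂ))⁻¹ • ∑ m ∈ SF, z ^ m • Cm m with hgdef
  have hFg : ∀ z : ℂ, z ≠ 0 → ‖z‖ < δ₃ → F z = g z := by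
    intro z hz0 hz
    have hzN : (z ^ N₀ : ℂ) ≠ 0 := pow_ne_zero _ hz0
    rw [hgdef]; simp only
    rw [← hrep z hz, hh]; simp only
    rw [smul_smul, inv_mul_cancel₀ hzN, one_smul]
  -- identity theorem on U
  set U : Set ℂ := (D ∪ {0})ᶜ with hUdef
  have hUopen : IsOpen U := (hDclosed.union isClosed_singleton).isOpen_compl
  have hUD : U ⊆ Dᶜ := fun z hz => fun hzD => hz (Or.inl hzD)
  have hUmem : ∀ z : ℂ, z ∉ D → z ≠ 0 → z ∈ U := by
    intro z h1 h2
    intro hcon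
    rcases hcon with h | h
    · exact h1 h
    · exact h2 h
  have hUconn : IsPreconnected U := by
    have hcount : (D ∪ {(0 : ℂ)}).Countable :=
      ((HereditarilyLindelof_LindelofSets D).countable hDdiscrete).union
        (Set.countable_singleton 0)
    have hrank : 1 < Module.rank ℝ ℂ := by
      rw [Complex.rank_real_complex]; norm_num
    exact (hcount.isPathConnected_compl_of_one_lt_rank hrank).isConnected.isPreconnected
  set ρ : ℝ := min δ₃ ε with hρdef
  have hρpos : 0 < ρ := lt_min hδ₃ hεpos
  set zs : ℂ := ((ρ / 2 : ℝ) : ℂ) with hzsdef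
  have hzs0 : zs ≠ 0 := by
    rw [hzsdef]
    exact_mod_cast ne_of_gt (half_pos hρpos)
  have hzsabs : ‖zs‖ = ρ / 2 := by
    rw [hzsdef, Complex.norm_real, Real.norm_eq_abs, abs_of_pos (half_pos hρpos)]
  have hzsδ : ‖zs‖ < δ₃ := by
    rw [hzsabs]
    calc ρ / 2 < ρ := half_lt_self hρpos
    _ ≤ δ₃ := min_le_left _ _
  have hzsε : ‖zs‖ < ε := by
    rw [hzsabs]
    calc ρ / 2 < ρ := half_lt_self hρpos
    _ ≤ ε := min_le_right _ _
  have hzsD : zs ∉ D := (hpunc zs hzs0 hzsε).1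
  have hzsU : zs ∈ U := hUmem zs hzsD hzs0
  set W : Set ℂ := {z : ℂ | z ≠ 0 ∧ ‖z‖ < δ₃} with hWdef
  have hWopen : IsOpen W := by
    have h1 : IsOpen {z : ℂ | z ≠ 0} := isOpen_ne
    have h2 : IsOpen {z : ℂ | ‖z‖ < δ₃} :=
      isOpen_lt continuous_norm continuous_const
    exact h1.inter h2
  have hzsW : zs ∈ W := ⟨hzs0, hzsδ⟩
  have hganal : ∀ i j, AnalyticOnNhd ℂ (fun z => g z i j) U := by
    intro i j y hy
    have hy0 : y ≠ 0 := fun hcon => hy (Or.inr (by simp [hcon]))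
    have h1 : AnalyticAt ℂ (fun z : ℂ => ((z ^ N₀ : ℂ))⁻¹) y :=
      (analyticAt_id.pow _).inv (pow_ne_zero _ hy0)
    have h2 : AnalyticAt ℂ (fun z : ℂ => ∑ m ∈ SF, z ^ m * Cm m i j) y :=
      Finset.analyticAt_fun_sum _ (fun m _ => (analyticAt_id.pow _).mul analyticAt_const)
    have h3 := h1.mul h2
    have he : (fun z => g z i j) = fun z : ℂ => ((z ^ N₀ : ℂ))⁻¹ * ∑ m ∈ SF, z ^ m * Cm m i j := by
      funext z
      rw [hgdef]
      simp [Matrix.smul_apply, Matrix.sum_apply, smul_eq_mul, Finset.mul_sum]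
    rw [he]
    exact h3
  have hEq : ∀ i j, Set.EqOn (fun z => F z i j) (fun z => g z i j) U := by
    intro i j
    refine AnalyticOnNhd.eqOn_of_preconnected_of_eventuallyEq
      ((hFanalytic i j).mono hUD) (hganal i j) hUconn hzsU ?_
    filter_upwards [hWopen.mem_nhds hzsW] with z hz
    exact congrFun (congrFun (congrArg (fun (M : Matrix (Fin p) (Fin n) ℂ) => fun i j => M i j) (hFg z hz.1 hz.2)) i) j
  have hFgU : ∀ z ∈ U, F z = g z := by
    intro z hz
    ext i j
    exact hEq i j hz
  -- final computation
  have haz₀0 : (γ q : ℂ) * z₀ ≠ 0 := mul_ne_zero ha0 hz₀0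
  have hz₀U : z₀ ∈ U := hUmem z₀ hz₀D hz₀0
  have haz₀U : (γ q : ℂ) * z₀ ∈ U := hUmem _ haz₀ haz₀0
  rw [hFgU _ haz₀U, hFgU _ hz₀U, hgdef]
  set ΦA : Matrix (Fin n) (Fin n) ℂ :=
    (Q * Matrix.diagonal (fun i => (γ (c i) : ℂ)) * Q⁻¹) * unipPow Au l with hΦA
  set ΦB : Matrix (Fin p) (Fin p) ℂ :=
    (R * Matrix.diagonal (fun j => (γ (d j) : ℂ)) * R⁻¹) * unipPow Bu l with hΦB
  rw [Matrix.smul_mul, Matrix.sum_mul, Matrix.mul_smul, Matrix.mul_sum]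
  rw [Finset.smul_sum, Finset.smul_sum]
  refine Finset.sum_congr rfl (fun m _ => ?_)
  rw [Matrix.smul_mul, Matrix.mul_smul, (hkey m).1]
  rw [smul_smul, smul_smul, smul_smul]
  congr 1
  have hz₀N : (z₀ ^ N₀ : ℂ) ≠ 0 := pow_ne_zero _ hz₀0
  have haz₀N : (((γ q : ℂ) * z₀) ^ N₀ : ℂ) ≠ 0 := pow_ne_zero _ haz₀0
  rw [zpow_sub₀ ha0, zpow_natCast, zpow_natCast]
  field_simp
  ring
end

section
/- Every continuous group homomorphism γ : ℂ* → ℂ* with γ(q) = 1 lies in the subgroup generated by the two fundamental loops: there exist integers m, n such that γ(z) = γ₁(z)^m · γ₂(z)^n for all z ∈ ℂ*. -/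
open Complex

/-- Every continuous multiplicative map `ℝ → ℂ` with `f 0 = 1` is `exp (c·)`. -/
lemma hom_eq_exp (f : ℝ → ℂ) (hc : Continuous f) (h1 : f 0 = 1)
    (hm : ∀ x y : ℝ, f (x + y) = f x * f y) :
    ∃ c : ℂ, ∀ x : ℝ, f x = Complex.exp (c * x) := by
  set F : ℝ → ℂ := fun x => ∫ t in (0:ℝ)..x, f t with hFdef
  have hFd : ∀ x : ℝ, HasDerivAt F (f x) x := fun x =>
    (hc.integral_hasStrictDerivAt 0 x).hasDerivAt
  have hFa : ∃ a : ℝ, F a ≠ 0 := by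
    by_contra h
    push_neg at h
    have hF0 : F = fun _ => (0:ℂ) := funext h
    have := (hFd 0).unique (by rw [hF0]; exact hasDerivAt_const 0 0)
    rw [h1] at this; exact one_ne_zero this
  obtain ⟨a, ha⟩ := hFa
  have key : ∀ x : ℝ, f x = (F (x + a) - F x) / F a := by
    intro x
    have h1' : F (x + a) - F x = ∫ t in x..(x + a), f t := by
      have := intervalIntegral.integral_add_adjacent_intervals
        (hc.intervalIntegrable (μ := MeasureTheory.volume) 0 x)
        (hc.intervalIntegrable (μ := MeasureTheory.volume) x (x + a))
      simp only [hFdef]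
      rw [← this]; ring
    have h2' : (∫ t in x..(x + a), f t) = f x * F a := by
      rw [show (∫ t in x..(x+a), f t) = ∫ t in (0:ℝ)..a, f (x + t) by
        rw [intervalIntegral.integral_comp_add_left]; ring_nf]
      simp only [hm]
      rw [intervalIntegral.integral_const_mul]
    rw [h1', h2', mul_div_assoc, div_self ha, mul_one]
  set c : ℂ := (f a - 1) / F a with hcdef
  have hfd : ∀ x : ℝ, HasDerivAt f (c * f x) x := by
    intro x
    have hshift : HasDerivAt (fun x : ℝ => F (x + a)) (f (x + a)) x := by
      exact (hFd (x + a)).comp_add_const x a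
    have hd : HasDerivAt (fun x => (F (x + a) - F x) / F a)
        ((f (x + a) - f x) / F a) x := (hshift.sub (hFd x)).div_const _
    have : HasDerivAt f ((f (x + a) - f x) / F a) x := by
      apply hd.congr_of_eventuallyEq
      filter_upwards with y using (key y)
    convert this using 1
    rw [hm x a, hcdef]
    field_simp
  have hg : ∀ x : ℝ, HasDerivAt (fun x : ℝ => f x * Complex.exp (-(c * x))) 0 x := by
    intro x
    have he : HasDerivAt (fun x : ℝ => Complex.exp (-(c * x)))
        (-c * Complex.exp (-(c * x))) x := by
      have hE : HasDerivAt (fun z : ℂ => Complex.exp (-(c * z)))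
          (-c * Complex.exp (-(c * (x:ℂ)))) (x:ℂ) := by
        have := (((hasDerivAt_id (x:ℂ)).const_mul c).neg).cexp
        simpa [mul_comm] using this
      exact hE.comp_ofReal
    have := (hfd x).mul he
    convert this using 1
    · rfl
    · rfl
    · ring
  have hconst : ∀ x : ℝ, f x * Complex.exp (-(c * x)) = 1 := by
    intro x
    have := is_const_of_deriv_eq_zero (fun y => (hg y).differentiableAt)
      (fun y => (hg y).deriv) x 0
    simpa [h1] using this
  refine ⟨c, fun x => ?_⟩
  have h := hconst x
  rw [Complex.exp_neg, mul_inv_eq_one₀ (Complex.exp_ne_zero _)] at h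
  exact h


/-- The real number `y` such that `|z| = |q^y|`, where `q = e^{-2πiτ}`. -/
noncomputable def yOf (τ : ℂ) (z : ℂ) : ℝ :=
  Real.log ‖z‖ / (2 * Real.pi * τ.im)

/-- `q^y := e^{-2πiτy}` for real `y`. -/
noncomputable def qRpow (τ : ℂ) (y : ℝ) : ℂ :=
  Complex.exp (-(2 * (Real.pi : ℂ) * Complex.I) * τ * (y : ℂ))

/-- The first fundamental loop `γ₁(u·q^y) = u`. -/
noncomputable def loop₁ (τ : ℂ) (z : ℂ) : ℂ :=
  z / qRpow τ (yOf τ z)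

/-- The second fundamental loop `γ₂(u·q^y) = e^{2πiy}`. -/
noncomputable def loop₂ (τ : ℂ) (z : ℂ) : ℂ :=
  Complex.exp (2 * (Real.pi : ℂ) * Complex.I * (yOf τ z : ℂ))

/-- Every continuous group homomorphism `γ : ℂ* → ℂ*` with `γ(q) = 1` is of
the form `γ₁^m γ₂^n` for some integers `m, n`. -/
theorem continuous_character_generated_by_fundamental_loops
    (τ : ℂ) (hτ : 0 < τ.im)
    (q : ℂ) (hq : q = Complex.exp (-(2 * (Real.pi : ℂ) * Complex.I) * τ))
    (γ : ℂ → ℂ)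
    (hne : ∀ z : ℂ, z ≠ 0 → γ z ≠ 0)
    (hmul : ∀ z w : ℂ, z ≠ 0 → w ≠ 0 → γ (z * w) = γ z * γ w)
    (hcont : ContinuousOn γ {z : ℂ | z ≠ 0})
    (hγq : γ q = 1) :
    ∃ m n : ℤ, ∀ z : ℂ, z ≠ 0 → γ z = loop₁ τ z ^ m * loop₂ τ z ^ n := by
  have hπ : (Real.pi : ℝ) ≠ 0 := Real.pi_ne_zero
  have him : τ.im ≠ 0 := ne_of_gt hτ
  have hγ1 : γ 1 = 1 := by
    have h := hmul 1 1 one_ne_zero one_ne_zero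
    simp only [mul_one] at h
    have := hne 1 one_ne_zero
    field_simp at h
    tauto
  -- the map `t ↦ γ (exp (2πI t))`
  set f : ℝ → ℂ := fun t => γ (Complex.exp (2 * (Real.pi : ℂ) * Complex.I * t)) with hfdef
  have hfc : Continuous f := by
    apply hcont.comp_continuous
    · exact Complex.continuous_exp.comp (by continuity)
    · intro t; exact Complex.exp_ne_zero _
  have hf0 : f 0 = 1 := by simp [hfdef, hγ1]
  have hfm : ∀ x y : ℝ, f (x + y) = f x * f y := by
    intro x y
    simp only [hfdef]
    rw [← hmul _ _ (Complex.exp_ne_zero _) (Complex.exp_ne_zero _), ← Complex.exp_add]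
    push_cast
    ring_nf
  obtain ⟨a, hfa⟩ := hom_eq_exp f hfc hf0 hfm
  -- the map `y ↦ γ (q^y)`
  set g : ℝ → ℂ := fun y => γ (qRpow τ y) with hgdef
  have hgc : Continuous g := by
    apply hcont.comp_continuous
    · exact Complex.continuous_exp.comp (by continuity)
    · intro y; exact Complex.exp_ne_zero _
  have hg0 : g 0 = 1 := by simp [hgdef, qRpow, hγ1]
  have hgm : ∀ x y : ℝ, g (x + y) = g x * g y := by
    intro x y
    simp only [hgdef, qRpow]
    rw [← hmul _ _ (Complex.exp_ne_zero _) (Complex.exp_ne_zero _), ← Complex.exp_add]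
    push_cast
    ring_nf
  obtain ⟨b, hgb⟩ := hom_eq_exp g hgc hg0 hgm
  -- `a` and `b` are integer multiples of `2πI`
  have hf1 : f 1 = 1 := by
    simp only [hfdef, Complex.ofReal_one, mul_one, Complex.exp_two_pi_mul_I, hγ1]
  obtain ⟨m, hma⟩ : ∃ m : ℤ, a = m * (2 * Real.pi * Complex.I) := by
    rw [← Complex.exp_eq_one_iff]
    have := hfa 1
    rw [hf1] at this
    simpa using this.symm
  have hg1 : g 1 = 1 := by
    have : qRpow τ 1 = q := by rw [hq, qRpow]; norm_num
    rw [hgdef]; simp only [this, hγq]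
  obtain ⟨n, hnb⟩ : ∃ n : ℤ, b = n * (2 * Real.pi * Complex.I) := by
    rw [← Complex.exp_eq_one_iff]
    have := hgb 1
    rw [hg1] at this
    simpa using this.symm
  refine ⟨m, n, fun z hz => ?_⟩
  set y : ℝ := yOf τ z with hydef
  set Q : ℂ := qRpow τ y with hQdef
  have hQne : Q ≠ 0 := Complex.exp_ne_zero _
  set u : ℂ := z / Q with hudef
  have hune : u ≠ 0 := div_ne_zero hz hQne
  have habsz : (0:ℝ) < ‖z‖ := by
    simpa using (norm_pos_iff.mpr hz)
  have habsQ : ‖Q‖ = ‖z‖ := by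
    rw [hQdef, qRpow, Complex.norm_exp]
    have hre : (-(2 * (Real.pi : ℂ) * Complex.I) * τ * (y : ℂ)).re
        = 2 * Real.pi * τ.im * y := by
      simp [Complex.mul_re, Complex.mul_im]
    rw [hre, hydef, yOf]
    rw [show 2 * Real.pi * τ.im * (Real.log ‖z‖ / (2 * Real.pi * τ.im))
        = Real.log ‖z‖ by field_simp]
    exact Real.exp_log habsz
  have habsu : ‖u‖ = 1 := by
    rw [hudef, norm_div, habsQ, div_self (ne_of_gt habsz)]
  set t : ℝ := Complex.arg u / (2 * Real.pi) with htdef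
  have hut : Complex.exp (2 * (Real.pi : ℂ) * Complex.I * t) = u := by
    have h1 : (2 * (Real.pi : ℂ) * Complex.I * t) = Complex.arg u * Complex.I := by
      have hπc : ((Real.pi : ℂ)) ≠ 0 := by
        simpa using Complex.ofReal_ne_zero.mpr Real.pi_ne_zero
      rw [htdef]
      push_cast
      field_simp
    rw [h1]
    have := Complex.norm_mul_exp_arg_mul_I u
    rwa [habsu, Complex.ofReal_one, one_mul] at this
  have hz' : z = u * Q := by
    rw [hudef]; field_simp
  have hsplit : γ z = f t * g y := by
    rw [hz', hmul u Q hune hQne, hfdef, hgdef]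
    simp only [hut]
    rfl
  have hft : f t = u ^ m := by
    rw [hfa t, hma, ← hut, ← Complex.exp_int_mul]
    congr 1
    ring
  have hgy : g y = Complex.exp (2 * (Real.pi : ℂ) * Complex.I * y) ^ n := by
    rw [hgb y, hnb, ← Complex.exp_int_mul]
    congr 1
    ring
  have hl1 : loop₁ τ z = u := rfl
  have hl2 : loop₂ τ z = Complex.exp (2 * (Real.pi : ℂ) * Complex.I * y) := rfl
  rw [hsplit, hft, hgy, hl1, hl2]
end

section
/- Let A be an n×n matrix of rational functions of z, holomorphic outside a finite set S ⊂ ℂ∖{0}, with A(0) = Iₙ. Let U = ℂ ∖ ⋃_{i≥1} q^i·S (an open set containing 0, since |q| > 1 makes ⋃_{i≥1} q^i·S closed and discrete). Then: (i) for every z ∈ U the partial products P_N(z) = A(q⁻¹z)·A(q⁻²z)⋯A(q^{-N}z) converge as N → ∞; (ii) the limit X(z) = lim_N P_N(z) defines a holomorphic function on U with X(0) = Iₙ; (iii) X(qz) = A(z)·X(z) whenever z ∈ U and qz ∈ U. Thus every system regular at 0 has an explicit fundamental solution holomorphic at 0 given by the infinite product ∏_{i≥1} A(q^{-i}z). -/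
open Matrix Filter Topology

namespace RegAux

attribute [local instance] Matrix.linftyOpNormedAddCommGroup Matrix.linftyOpNormedRing

variable {n : ℕ}

lemma entry_le (M : Matrix (Fin n) (Fin n) ℂ) (i j : Fin n) : ‖M i j‖ ≤ ‖M‖ := by
  have h : ‖M i j‖₊ ≤ ‖M‖₊ := by
    rw [Matrix.linfty_opNNNorm_def]
    exact le_trans (Finset.single_le_sum (f := fun k => ‖M i k‖₊)
      (fun _ _ => zero_le) (Finset.mem_univ j))
      (Finset.le_sup (f := fun i => ∑ j, ‖M i j‖₊) (Finset.mem_univ i))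
  exact_mod_cast h


lemma norm_one_le : ‖(1 : Matrix (Fin n) (Fin n) ℂ)‖ ≤ 1 := by
  rw [show (1 : Matrix (Fin n) (Fin n) ℂ) = diagonal 1 from rfl, Matrix.linfty_opNorm_diagonal]
  refine (pi_norm_le_iff_of_nonneg zero_le_one).2 fun i => by simp

lemma prod_norm_le (c : ℕ → ℝ) (B : ℕ → Matrix (Fin n) (Fin n) ℂ)
    (hB : ∀ i, ‖B i‖ ≤ 1 + c i) (hc : ∀ i, 0 ≤ c i) (N : ℕ) :
    ‖((List.range N).map B).prod‖ ≤ ∏ i ∈ Finset.range N, (1 + c i) := by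
  induction N with
  | zero =>
      rw [List.range_zero, List.map_nil, List.prod_nil, Finset.range_zero, Finset.prod_empty]
      exact norm_one_le
  | succ N ih =>
      rw [List.range_succ, List.map_append, List.prod_append, Finset.prod_range_succ]
      calc ‖((List.range N).map B).prod * ([N].map B).prod‖
          ≤ ‖((List.range N).map B).prod‖ * ‖([N].map B).prod‖ := norm_mul_le _ _
        _ ≤ (∏ i ∈ Finset.range N, (1 + c i)) * (1 + c N) := by
            refine mul_le_mul ih (by simpa using hB N) (norm_nonneg _) ?_
            exact Finset.prod_nonneg fun i _ => by linarith [hc i]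

lemma prod_one_add_le_exp (c : ℕ → ℝ) (hc0 : ∀ i, 0 ≤ c i) (hc : Summable c) (N : ℕ) :
    ∏ i ∈ Finset.range N, (1 + c i) ≤ Real.exp (∑' i, c i) := by
  calc ∏ i ∈ Finset.range N, (1 + c i) ≤ ∏ i ∈ Finset.range N, Real.exp (c i) :=
        Finset.prod_le_prod (fun i _ => by linarith [hc0 i])
          (fun i _ => by linarith [Real.add_one_le_exp (c i)])
    _ = Real.exp (∑ i ∈ Finset.range N, c i) := (Real.exp_sum _ _).symm
    _ ≤ Real.exp (∑' i, c i) := Real.exp_le_exp.2 (Summable.sum_le_tsum _ (fun i _ => hc0 i) hc)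

lemma prod_diff_le (c : ℕ → ℝ) (B : ℕ → Matrix (Fin n) (Fin n) ℂ)
    (hB : ∀ i, ‖B i - 1‖ ≤ c i) (hc0 : ∀ i, 0 ≤ c i) (hc : Summable c) :
    ∀ m N, m ≤ N → ‖((List.range N).map B).prod - ((List.range m).map B).prod‖ ≤
      Real.exp (∑' i, c i) * ∑ i ∈ Finset.Ico m N, c i := by
  have hBn : ∀ i, ‖B i‖ ≤ 1 + c i := fun i => by
    calc ‖B i‖ = ‖B i - 1 + 1‖ := by rw [sub_add_cancel]
      _ ≤ ‖B i - 1‖ + ‖(1 : Matrix (Fin n) (Fin n) ℂ)‖ := norm_add_le _ _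
      _ ≤ c i + 1 := add_le_add (hB i) norm_one_le
      _ = 1 + c i := by ring
  have hPle : ∀ N, ‖((List.range N).map B).prod‖ ≤ Real.exp (∑' i, c i) := fun N =>
    (prod_norm_le c B hBn hc0 N).trans (prod_one_add_le_exp c hc0 hc N)
  intro m N h
  induction N, h using Nat.le_induction with
  | base => simp [Real.exp_pos]
  | succ N hmN ih =>
      rw [List.range_succ, List.map_append, List.prod_append,
        Finset.sum_Ico_succ_top hmN]
      have key : ((List.range N).map B).prod * ([N].map B).prod -
          ((List.range m).map B).prod =
          ((List.range N).map B).prod * (B N - 1) +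
          (((List.range N).map B).prod - ((List.range m).map B).prod) := by
        simp only [List.map_cons, List.map_nil, List.prod_cons, List.prod_nil, mul_one]
        rw [mul_sub, mul_one]; abel
      rw [key]
      calc _ ≤ ‖((List.range N).map B).prod * (B N - 1)‖ +
            ‖((List.range N).map B).prod - ((List.range m).map B).prod‖ := norm_add_le _ _
        _ ≤ Real.exp (∑' i, c i) * c N +
            Real.exp (∑' i, c i) * ∑ i ∈ Finset.Ico m N, c i := by
            refine add_le_add ?_ ih
            calc ‖((List.range N).map B).prod * (B N - 1)‖
                ≤ ‖((List.range N).map B).prod‖ * ‖B N - 1‖ := norm_mul_le _ _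
              _ ≤ Real.exp (∑' i, c i) * c N :=
                  mul_le_mul (hPle N) (hB N) (norm_nonneg _) (Real.exp_pos _).le
        _ = Real.exp (∑' i, c i) * ((∑ i ∈ Finset.Ico m N, c i) + c N) := by ring

lemma ucauchy (c : ℕ → ℝ) (hc0 : ∀ i, 0 ≤ c i) (hc : Summable c)
    {K : Set ℂ} (B : ℕ → ℂ → Matrix (Fin n) (Fin n) ℂ)
    (hB : ∀ i, ∀ z ∈ K, ‖B i z - 1‖ ≤ c i) :
    UniformCauchySeqOn (fun N z => ((List.range N).map (fun i => B i z)).prod) atTop K := by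
  refine Metric.uniformCauchySeqOn_iff.2 ?_
  intro ε hε
  set E := Real.exp (∑' i, c i) with hE
  have hEpos : 0 < E := Real.exp_pos _
  have hcs : CauchySeq (fun N => ∑ i ∈ Finset.range N, c i) :=
    hc.hasSum.tendsto_sum_nat.cauchySeq
  obtain ⟨N₀, hN₀⟩ := Metric.cauchySeq_iff.1 hcs (ε / E) (div_pos hε hEpos)
  refine ⟨N₀, fun m hm N hN z hz => ?_⟩
  have key : ∀ a b : ℕ, N₀ ≤ a → N₀ ≤ b → a ≤ b →
      dist (((List.range a).map (fun i => B i z)).prod)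
        (((List.range b).map (fun i => B i z)).prod) < ε := by
    intro a b ha hb hab
    rw [dist_eq_norm, norm_sub_rev]
    have h1 : ∑ i ∈ Finset.Ico a b, c i < ε / E := by
      have := hN₀ a ha b hb
      rw [Real.dist_eq] at this
      have hsum : ∑ i ∈ Finset.Ico a b, c i =
          (∑ i ∈ Finset.range b, c i) - ∑ i ∈ Finset.range a, c i :=
        Finset.sum_Ico_eq_sub _ hab
      calc ∑ i ∈ Finset.Ico a b, c i ≤ |∑ i ∈ Finset.range a, c i - ∑ i ∈ Finset.range b, c i| := by
            rw [abs_sub_comm, hsum]; exact le_abs_self _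
        _ < ε / E := this
    calc ‖((List.range b).map (fun i => B i z)).prod -
          ((List.range a).map (fun i => B i z)).prod‖ ≤ E * ∑ i ∈ Finset.Ico a b, c i :=
          prod_diff_le c (fun i => B i z) (fun i => hB i z hz) hc0 hc a b hab
      _ < E * (ε / E) := by exact (mul_lt_mul_of_pos_left h1 hEpos)
      _ = ε := by field_simp
  rcases le_total m N with h | h
  · exact key m N hm hN h
  · rw [dist_comm]; exact key N m hN hm h



lemma norm_le_sum (M : Matrix (Fin n) (Fin n) ℂ) :
    ‖M‖ ≤ ∑ p : Fin n × Fin n, ‖M p.1 p.2‖ := by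
  have h : ‖M‖₊ ≤ ∑ p : Fin n × Fin n, ‖M p.1 p.2‖₊ := by
    rw [Matrix.linfty_opNNNorm_def, Fintype.sum_prod_type]
    exact Finset.sup_le fun i _ => Finset.single_le_sum
      (f := fun i => ∑ j, ‖M i j‖₊) (fun _ _ => zero_le) (Finset.mem_univ i)
  calc ‖M‖ = ((‖M‖₊ : ℝ)) := rfl
    _ ≤ ((∑ p : Fin n × Fin n, ‖M p.1 p.2‖₊ : NNReal) : ℝ) := by exact_mod_cast h
    _ = ∑ p : Fin n × Fin n, ‖M p.1 p.2‖ := by push_cast; rfl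

def USet (q : ℂ) (S : Set ℂ) : Set ℂ := {z : ℂ | ∀ i : ℕ, ∀ s ∈ S, z ≠ q ^ (i + 1) * s}

lemma div_not_mem {q : ℂ} (hq : q ≠ 0) {S : Set ℂ} {z : ℂ} (hz : z ∈ USet q S) (i : ℕ) :
    z / q ^ (i + 1) ∉ S := by
  intro hmem
  exact hz i _ hmem (by rw [mul_comm, div_mul_cancel₀ _ (pow_ne_zero _ hq)])

lemma zero_mem_USet {q : ℂ} (hq0 : q ≠ 0) {S : Set ℂ} (hS0 : (0:ℂ) ∉ S) : (0:ℂ) ∈ USet q S := by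
  intro i s hs h
  rcases mul_eq_zero.1 h.symm with h' | h'
  · exact pow_ne_zero _ hq0 h'
  · exact hS0 (h' ▸ hs)

lemma isOpen_USet {q : ℂ} (hq : 1 < ‖q‖) {S : Set ℂ} (hSfin : S.Finite)
    (hS0 : (0:ℂ) ∉ S) : IsOpen (USet q S) := by
  rcases S.eq_empty_or_nonempty with rfl | hSne
  · have : USet q ∅ = Set.univ := by ext z; simp [USet]
    rw [this]; exact isOpen_univ
  rw [Metric.isOpen_iff]
  intro z hz
  obtain ⟨s₀, hs₀S, hs₀min⟩ := hSfin.toFinset.exists_min_image (fun z : ℂ => ‖z‖)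
    (by simpa [Set.Finite.toFinset_nonempty] using hSne)
  rw [Set.Finite.mem_toFinset] at hs₀S
  have hm : 0 < ‖s₀‖ := by
    simp only [norm_pos_iff]
    rintro rfl; exact hS0 hs₀S
  obtain ⟨N, hN⟩ := Filter.eventually_atTop.1
    ((tendsto_pow_atTop_atTop_of_one_lt hq).eventually_gt_atTop
      ((‖z‖ + 1) / ‖s₀‖))
  set F : Set ℂ := (fun p : ℕ × ℂ => q ^ (p.1 + 1) * p.2) '' ((Set.Iio N) ×ˢ S) with hF
  have hFfin : F.Finite := ((Set.finite_Iio N).prod hSfin).image _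
  have hzF : z ∉ F := by
    rintro ⟨⟨i, s⟩, ⟨hi, hs⟩, heq⟩
    exact hz i s hs heq.symm
  obtain ⟨ε, hε, hball⟩ := Metric.isOpen_iff.1 hFfin.isClosed.isOpen_compl z hzF
  refine ⟨min ε 1, lt_min hε one_pos, fun w hw => ?_⟩
  intro i s hs heq
  have hwz : dist w z < min ε 1 := Metric.mem_ball.1 hw
  rcases lt_or_ge i N with hiN | hiN
  · exact hball (Metric.mem_ball.2 (lt_of_lt_of_le hwz (min_le_left _ _)))
      ⟨(i, s), ⟨hiN, hs⟩, heq.symm⟩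
  · have h1 : ‖w‖ < ‖z‖ + 1 := by
      have : ‖w - z‖ < 1 := lt_of_lt_of_le (by
        simpa [Complex.dist_eq] using hwz) (min_le_right _ _)
      calc ‖w‖ = ‖z + (w - z)‖ := by ring_nf
        _ ≤ ‖z‖ + ‖w - z‖ := norm_add_le _ _
        _ < ‖z‖ + 1 := by linarith
    have h2 : ‖z‖ + 1 < ‖q‖ ^ (i+1) * ‖s₀‖ := by
      have := hN (i+1) (by omega)
      rwa [div_lt_iff₀ hm] at this
    have h3 : ‖q‖ ^ (i+1) * ‖s₀‖ ≤ ‖q ^ (i+1) * s‖ := by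
      rw [norm_mul, norm_pow]
      exact mul_le_mul_of_nonneg_left (hs₀min s (hSfin.mem_toFinset.2 hs))
        (pow_nonneg (norm_nonneg _) _)
    rw [heq] at h1
    linarith

variable {A : ℂ → Matrix (Fin n) (Fin n) ℂ} {S : Set ℂ}

lemma entry_diffOn
    (hrat : ∀ i j, ∃ P Q : Polynomial ℂ,
      (∀ z : ℂ, z ∉ S → Q.eval z ≠ 0) ∧
      (∀ z : ℂ, z ∉ S → A z i j = P.eval z / Q.eval z)) (i j : Fin n) :
    DifferentiableOn ℂ (fun z => A z i j) Sᶜ := by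
  obtain ⟨P, Q, hQ, hPQ⟩ := hrat i j
  refine DifferentiableOn.congr (f := fun z => P.eval z / Q.eval z) ?_ fun z hz => hPQ z hz
  exact DifferentiableOn.div P.differentiable.differentiableOn
    Q.differentiable.differentiableOn fun z hz => hQ z hz

lemma entry_diffOn_scaled {q : ℂ} (hq : q ≠ 0)
    (hrat : ∀ i j, ∃ P Q : Polynomial ℂ,
      (∀ z : ℂ, z ∉ S → Q.eval z ≠ 0) ∧
      (∀ z : ℂ, z ∉ S → A z i j = P.eval z / Q.eval z)) (k : ℕ) (i j : Fin n) :
    DifferentiableOn ℂ (fun z => A (z / q ^ (k+1)) i j) (USet q S) :=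
  (entry_diffOn hrat i j).comp ((differentiable_id.div_const _).differentiableOn)
    (fun _ hz => div_not_mem hq hz k)

lemma taylor (hSfin : S.Finite) (hS0 : (0:ℂ) ∉ S)
    (hrat : ∀ i j, ∃ P Q : Polynomial ℂ,
      (∀ z : ℂ, z ∉ S → Q.eval z ≠ 0) ∧
      (∀ z : ℂ, z ∉ S → A z i j = P.eval z / Q.eval z))
    (hA0 : A 0 = 1) :
    ∃ r M : ℝ, 0 < r ∧ 0 ≤ M ∧ ∀ w : ℂ, ‖w‖ < r → ‖A w - 1‖ ≤ M * ‖w‖ := by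
  have hS : Sᶜ ∈ 𝓝 (0:ℂ) := hSfin.isClosed.isOpen_compl.mem_nhds hS0
  have key : ∀ p : Fin n × Fin n, ∃ C : ℝ, ∀ᶠ w in 𝓝 (0:ℂ),
      ‖A w p.1 p.2 - (1 : Matrix (Fin n) (Fin n) ℂ) p.1 p.2‖ ≤ C * ‖w‖ := by
    intro p
    have hdiff : DifferentiableAt ℂ (fun w => A w p.1 p.2) 0 :=
      (entry_diffOn hrat p.1 p.2).differentiableAt hS
    have h0 : A 0 p.1 p.2 = (1 : Matrix (Fin n) (Fin n) ℂ) p.1 p.2 := by rw [hA0]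
    have hO := hdiff.hasFDerivAt.isBigO_sub
    rw [Asymptotics.isBigO_iff] at hO
    obtain ⟨C, hC⟩ := hO
    exact ⟨C, hC.mono fun w hw => by simpa [h0, sub_zero] using hw⟩
  choose C hC using key
  have hev : ∀ᶠ w in 𝓝 (0:ℂ), ∀ p : Fin n × Fin n,
      ‖A w p.1 p.2 - (1 : Matrix (Fin n) (Fin n) ℂ) p.1 p.2‖ ≤ C p * ‖w‖ :=
    eventually_all.2 hC
  obtain ⟨r, hr, hball⟩ := Metric.eventually_nhds_iff_ball.1 hev
  refine ⟨r, max (∑ p : Fin n × Fin n, C p) 0, hr, le_max_right _ _, fun w hw => ?_⟩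
  have hwball : w ∈ Metric.ball (0:ℂ) r := by
    simpa [Metric.mem_ball, dist_zero_right] using hw
  calc ‖A w - 1‖ ≤ ∑ p : Fin n × Fin n, ‖(A w - 1) p.1 p.2‖ := norm_le_sum _
    _ ≤ ∑ p : Fin n × Fin n, C p * ‖w‖ := Finset.sum_le_sum fun p _ => by
        simpa [Matrix.sub_apply] using hball w hwball p
    _ = (∑ p : Fin n × Fin n, C p) * ‖w‖ := by rw [← Finset.sum_mul]
    _ ≤ max (∑ p : Fin n × Fin n, C p) 0 * ‖w‖ :=
        mul_le_mul_of_nonneg_right (le_max_left _ _) (norm_nonneg _)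

lemma exists_c {q : ℂ} (hq : 1 < ‖q‖) (hSfin : S.Finite) (hS0 : (0:ℂ) ∉ S)
    (hrat : ∀ i j, ∃ P Q : Polynomial ℂ,
      (∀ z : ℂ, z ∉ S → Q.eval z ≠ 0) ∧
      (∀ z : ℂ, z ∉ S → A z i j = P.eval z / Q.eval z))
    (hA0 : A 0 = 1) {K : Set ℂ} (hK : IsCompact K) (hKU : K ⊆ USet q S) :
    ∃ c : ℕ → ℝ, (∀ i, 0 ≤ c i) ∧ Summable c ∧
      ∀ k, ∀ z ∈ K, ‖A (z / q ^ (k+1)) - 1‖ ≤ c k := by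
  have hq0 : q ≠ 0 := by
    intro h; rw [h] at hq; simp at hq; linarith
  obtain ⟨r, M, hr, hM, hbound⟩ := taylor hSfin hS0 hrat hA0
  obtain ⟨R, hR⟩ := hK.exists_bound_of_continuousOn continuousOn_id
  set R' := max R 0 with hR'
  have hR'0 : 0 ≤ R' := le_max_right _ _
  have hzR : ∀ z ∈ K, ‖z‖ ≤ R' := fun z hz =>
    le_trans (by simpa using hR z hz) (le_max_left _ _)
  have hDk : ∀ k : ℕ, ∃ D : ℝ, 0 ≤ D ∧ ∀ z ∈ K, ‖A (z / q ^ (k+1)) - 1‖ ≤ D := by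
    intro k
    have hent : ∀ p : Fin n × Fin n, ∃ D, ∀ z ∈ K,
        ‖A (z / q ^ (k+1)) p.1 p.2 - (1 : Matrix (Fin n) (Fin n) ℂ) p.1 p.2‖ ≤ D := by
      intro p
      obtain ⟨D, hD⟩ := hK.exists_bound_of_continuousOn
        ((((entry_diffOn_scaled hq0 hrat k p.1 p.2).continuousOn).mono hKU).sub
          continuousOn_const)
      exact ⟨D, hD⟩
    choose D hD using hent
    refine ⟨max (∑ p : Fin n × Fin n, D p) 0, le_max_right _ _, fun z hz => ?_⟩
    calc ‖A (z / q ^ (k+1)) - 1‖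
        ≤ ∑ p : Fin n × Fin n, ‖(A (z / q ^ (k+1)) - 1) p.1 p.2‖ := norm_le_sum _
      _ ≤ ∑ p : Fin n × Fin n, D p := Finset.sum_le_sum fun p _ => by
          simpa [Matrix.sub_apply] using hD p z hz
      _ ≤ max (∑ p : Fin n × Fin n, D p) 0 := le_max_left _ _
  choose D hD0 hD using hDk
  obtain ⟨i₀, hi₀⟩ := Filter.eventually_atTop.1
    ((tendsto_pow_atTop_atTop_of_one_lt hq).eventually_gt_atTop (R' / r))
  have habs : (0:ℝ) < ‖q‖ := lt_trans one_pos hq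
  refine ⟨fun k => if k < i₀ then D k else M * R' * ‖q‖⁻¹ ^ (k+1), ?_, ?_, ?_⟩
  · intro i; dsimp only; split
    · exact hD0 i
    · positivity
  · have hgeom : Summable (fun k : ℕ => M * R' * ‖q‖⁻¹ ^ (k+1)) := by
      have h1 : Summable (fun k : ℕ => ‖q‖⁻¹ ^ k) :=
        summable_geometric_of_lt_one (by positivity) (inv_lt_one_of_one_lt₀ hq)
      have h2 : Summable (fun k : ℕ => ‖q‖⁻¹ ^ (k+1)) :=
        ((summable_nat_add_iff 1).2 h1)
      exact h2.mul_left _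
    refine (summable_nat_add_iff i₀).1 (Summable.congr ((summable_nat_add_iff i₀).2 hgeom) ?_)
    intro k
    simp only [if_neg (by omega : ¬ k + i₀ < i₀)]
  · intro k z hz
    dsimp only; split_ifs with h
    · exact hD k z hz
    · push_neg at h
      have hzr : ‖z / q ^ (k+1)‖ < r := by
        simp only [norm_div, norm_pow]
        have hpow : R' / r < ‖q‖ ^ (k+1) := hi₀ (k+1) (by omega)
        rw [div_lt_iff₀ hr, mul_comm] at hpow
        rw [div_lt_iff₀ (pow_pos habs _)]
        calc ‖z‖ ≤ R' := by simpa using hzR z hz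
          _ < r * ‖q‖ ^ (k+1) := by linarith
      calc ‖A (z / q ^ (k+1)) - 1‖ ≤ M * ‖z / q ^ (k+1)‖ := hbound _ hzr
        _ ≤ M * R' * ‖q‖⁻¹ ^ (k+1) := by
            simp only [norm_div, norm_pow]
            rw [div_eq_mul_inv, ← inv_pow, mul_assoc]
            exact mul_le_mul_of_nonneg_left (by
              exact mul_le_mul_of_nonneg_right (by simpa using hzR z hz)
                (by positivity)) hM


variable {q : ℂ} {A : ℂ → Matrix (Fin n) (Fin n) ℂ} {S : Set ℂ}

lemma pp_shift (hq : q ≠ 0) (A : ℂ → Matrix (Fin n) (Fin n) ℂ) (N : ℕ) (z : ℂ) :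
    ((List.range (N+1)).map (fun i => A (q * z / q ^ (i + 1)))).prod
      = A z * ((List.range N).map (fun i => A (z / q ^ (i + 1)))).prod := by
  rw [List.range_succ_eq_map]
  simp only [List.map_cons, List.map_map, List.prod_cons]
  congr 1
  · rw [pow_one, mul_div_cancel_left₀ _ hq]
  · refine congrArg List.prod (List.map_congr_left fun i _ => ?_)
    show A (q * z / q ^ (i + 1 + 1)) = A (z / q ^ (i + 1))
    rw [pow_succ']
    exact congrArg A (mul_div_mul_left _ _ hq)

lemma pp_entry_diffOn (hq0 : q ≠ 0)
    (hrat : ∀ i j, ∃ P Q : Polynomial ℂ,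
      (∀ z : ℂ, z ∉ S → Q.eval z ≠ 0) ∧
      (∀ z : ℂ, z ∉ S → A z i j = P.eval z / Q.eval z)) :
    ∀ (N : ℕ) (i j : Fin n), DifferentiableOn ℂ
      (fun z => (((List.range N).map (fun k => A (z / q ^ (k+1)))).prod) i j) (USet q S) := by
  intro N
  induction N with
  | zero =>
      intro i j
      simp only [List.range_zero, List.map_nil, List.prod_nil]
      exact differentiableOn_const _
  | succ N ih =>
      intro i j
      have hfun : (fun z => (((List.range (N+1)).map (fun k => A (z / q ^ (k+1)))).prod) i j)
          = fun z => ∑ k, (((List.range N).map (fun k => A (z / q ^ (k+1)))).prod) i k *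
              A (z / q ^ (N+1)) k j := by
        funext z
        rw [List.range_succ, List.map_append, List.prod_append]
        simp [Matrix.mul_apply]
      rw [hfun]
      exact DifferentiableOn.fun_sum fun k _ =>
        (ih i k).mul (entry_diffOn_scaled hq0 hrat N k j)

theorem aux (hq : 1 < ‖q‖) (hSfin : S.Finite) (hS0 : (0:ℂ) ∉ S)
    (hrat : ∀ i j, ∃ P Q : Polynomial ℂ,
      (∀ z : ℂ, z ∉ S → Q.eval z ≠ 0) ∧
      (∀ z : ℂ, z ∉ S → A z i j = P.eval z / Q.eval z))
    (hA0 : A 0 = 1) :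
    ∃ X : ℂ → Matrix (Fin n) (Fin n) ℂ,
      (∀ z ∈ USet q S, ∀ i j, Tendsto
        (fun N : ℕ => (((List.range N).map (fun k => A (z / q ^ (k + 1)))).prod) i j)
        atTop (𝓝 (X z i j))) ∧
      (∀ i j, DifferentiableOn ℂ (fun z => X z i j) (USet q S)) ∧
      X 0 = 1 ∧
      (∀ z ∈ USet q S, q * z ∈ USet q S → X (q * z) = A z * X z) := by
  have hq0 : q ≠ 0 := by
    intro h; rw [h] at hq; simp at hq; linarith
  set P : ℕ → ℂ → Matrix (Fin n) (Fin n) ℂ :=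
    fun N z => ((List.range N).map (fun k => A (z / q ^ (k + 1)))).prod with hP
  have hUC : ∀ K ⊆ USet q S, IsCompact K → UniformCauchySeqOn P atTop K := by
    intro K hKU hK
    obtain ⟨c, hc0, hcs, hcb⟩ := exists_c hq hSfin hS0 hrat hA0 hK hKU
    exact ucauchy c hc0 hcs _ (fun i z hz => hcb i z hz)
  have hptC : ∀ z ∈ USet q S, CauchySeq (fun N => P N z) := by
    intro z hz
    have h := hUC {z} (Set.singleton_subset_iff.2 hz) isCompact_singleton
    replace h := Metric.uniformCauchySeqOn_iff.1 h
    refine Metric.cauchySeq_iff.2 ?_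
    intro ε hε; obtain ⟨N, hN⟩ := h ε hε
    exact ⟨N, fun m hm k hk => hN m hm k hk z rfl⟩
  set X : ℂ → Matrix (Fin n) (Fin n) ℂ := fun z => limUnder atTop (fun N => P N z) with hX
  have hXlim : ∀ z ∈ USet q S, Tendsto (fun N => P N z) atTop (𝓝 (X z)) :=
    fun z hz => (hptC z hz).tendsto_limUnder
  have hTU : ∀ K ⊆ USet q S, IsCompact K → TendstoUniformlyOn P X atTop K := fun K hKU hK =>
    (hUC K hKU hK).tendstoUniformlyOn_of_tendsto (fun z hz => hXlim z (hKU hz))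
  have hopen : IsOpen (USet q S) := isOpen_USet hq hSfin hS0
  -- entrywise convergence
  have hent : ∀ z ∈ USet q S, ∀ i j, Tendsto (fun N => P N z i j) atTop (𝓝 (X z i j)) := by
    intro z hz i j
    rw [tendsto_iff_dist_tendsto_zero]
    have hmat : Tendsto (fun N => dist (P N z) (X z)) atTop (𝓝 0) :=
      tendsto_iff_dist_tendsto_zero.1 (hXlim z hz)
    refine squeeze_zero (fun N => dist_nonneg) (fun N => ?_) hmat
    rw [dist_eq_norm, dist_eq_norm]
    simpa [Matrix.sub_apply] using entry_le (P N z - X z) i j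
  have hdiffX : ∀ i j, DifferentiableOn ℂ (fun z => X z i j) (USet q S) := by
    intro i j
    have hloc : TendstoLocallyUniformlyOn (fun N z => P N z i j) (fun z => X z i j)
        atTop (USet q S) := by
      rw [tendstoLocallyUniformlyOn_iff_forall_isCompact hopen]
      intro K hKU hK
      rw [Metric.tendstoUniformlyOn_iff]
      intro ε hε
      have h := hTU K hKU hK
      replace h := Metric.tendstoUniformlyOn_iff.1 h
      filter_upwards [h ε hε] with N hN z hz
      calc dist (X z i j) (P N z i j) ≤ dist (X z) (P N z) := by
            rw [dist_eq_norm, dist_eq_norm]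
            simpa [Matrix.sub_apply] using entry_le (X z - P N z) i j
        _ < ε := hN z hz
    exact hloc.differentiableOn
      (Filter.Eventually.of_forall (fun N => pp_entry_diffOn hq0 hrat N i j)) hopen
  have h0U : (0:ℂ) ∈ USet q S := zero_mem_USet hq0 hS0
  have hconst : ∀ N, P N 0 = 1 := by
    intro N; induction N with
    | zero => simp [hP]
    | succ N ih =>
        rw [hP]
        simp only
        rw [List.range_succ, List.map_append, List.prod_append]
        simp only [List.map_cons, List.map_nil, List.prod_cons, List.prod_nil, mul_one]
        rw [zero_div, hA0]
        rw [hP] at ih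
        simp only at ih
        rw [ih, one_mul]
  have hX0 : X 0 = 1 := by
    ext i j
    have h1 : Tendsto (fun N => P N 0 i j) atTop (𝓝 (X 0 i j)) := hent 0 h0U i j
    have h2 : Tendsto (fun N => P N 0 i j) atTop (𝓝 ((1 : Matrix (Fin n) (Fin n) ℂ) i j)) := by
      simp only [hconst]; exact tendsto_const_nhds
    exact tendsto_nhds_unique h1 h2
  have hfe : ∀ z ∈ USet q S, q * z ∈ USet q S → X (q * z) = A z * X z := by
    intro z hz hqz
    ext i j
    have h1 : Tendsto (fun N => P (N+1) (q*z) i j) atTop (𝓝 (X (q*z) i j)) :=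
      (hent _ hqz i j).comp (tendsto_add_atTop_nat 1)
    have h2 : (fun N => P (N+1) (q*z) i j) = fun N => ∑ k, A z i k * P N z k j := by
      funext N
      rw [hP]; simp only
      rw [pp_shift hq0 A N z, Matrix.mul_apply]
    rw [h2] at h1
    have h3 : Tendsto (fun N => ∑ k, A z i k * P N z k j) atTop
        (𝓝 (∑ k, A z i k * X z k j)) :=
      tendsto_finset_sum _ fun k _ => (hent z hz k j).const_mul _
    have := tendsto_nhds_unique h1 h3
    rw [Matrix.mul_apply]
    exact this
  exact ⟨X, hent, hdiffX, hX0, hfe⟩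

end RegAux

/-- For a rational matrix `A` regular at `0` (`A(0) = Iₙ`) with poles in the
finite set `S ⊂ ℂ*`, the partial products `A(q⁻¹z)·A(q⁻²z)⋯A(q^{-N}z)`
converge on `U = ℂ ∖ ⋃_{i ≥ 1} qⁱ·S` to a holomorphic fundamental solution
`X` with `X(0) = Iₙ` and `X(qz) = A(z)·X(z)`. -/
theorem regular_system_infinite_product_solution
    (q : ℂ) (hq : 1 < ‖q‖) {n : ℕ}
    (A : ℂ → Matrix (Fin n) (Fin n) ℂ) (S : Set ℂ)
    (hSfin : S.Finite) (hS0 : (0 : ℂ) ∉ S)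
    (hrat : ∀ i j, ∃ P Q : Polynomial ℂ,
      (∀ z : ℂ, z ∉ S → Q.eval z ≠ 0) ∧
      (∀ z : ℂ, z ∉ S → A z i j = P.eval z / Q.eval z))
    (hA0 : A 0 = 1) :
    IsOpen {z : ℂ | ∀ i : ℕ, ∀ s ∈ S, z ≠ q ^ (i + 1) * s} ∧
    (0 : ℂ) ∈ {z : ℂ | ∀ i : ℕ, ∀ s ∈ S, z ≠ q ^ (i + 1) * s} ∧
    ∃ X : ℂ → Matrix (Fin n) (Fin n) ℂ,
      (∀ z ∈ {z : ℂ | ∀ i : ℕ, ∀ s ∈ S, z ≠ q ^ (i + 1) * s},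
        Tendsto (fun N : ℕ =>
            (((List.range N).map (fun i => A (z / q ^ (i + 1)))).prod))
          atTop (nhds (X z))) ∧
      (∀ i j, DifferentiableOn ℂ (fun z => X z i j)
        {z : ℂ | ∀ i : ℕ, ∀ s ∈ S, z ≠ q ^ (i + 1) * s}) ∧
      X 0 = 1 ∧
      (∀ z ∈ {z : ℂ | ∀ i : ℕ, ∀ s ∈ S, z ≠ q ^ (i + 1) * s},
        q * z ∈ {z : ℂ | ∀ i : ℕ, ∀ s ∈ S, z ≠ q ^ (i + 1) * s} →
        X (q * z) = A z * X z) := by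
  have hq0 : q ≠ 0 := by
    intro h; rw [h] at hq; simp at hq; linarith
  obtain ⟨X, h1, h2, h3, h4⟩ := RegAux.aux (q := q) (A := A) (S := S) hq hSfin hS0 hrat hA0
  refine ⟨RegAux.isOpen_USet hq hSfin hS0, RegAux.zero_mem_USet hq0 hS0, X, ?_, h2, h3, h4⟩
  intro z hz
  exact tendsto_pi_nhds.2 fun i => tendsto_pi_nhds.2 fun j => h1 z hz i j
end

section
/- Let r ∈ ℕ, let u₁,…,u_r, v₁,…,v_r ∈ ℂ* and a₀, a_∞ ∈ ℂ* satisfy a_∞·∏_{i=1}^r u_i = a₀·∏_{i=1}^r v_i. Define the connection number p(z) = (e_{q,a₀}(z) / e_{q,a_∞⁻¹}(1/z)) · ∏_{i=1}^r (u_i·Θ_q(z/u_i)) / (v_i·Θ_q(z/v_i)). Then p is elliptic: p(qz) = p(z) for every z ∈ ℂ* at which all the theta values occurring in the denominators of p(z) and of p(qz) (namely Θ_q(ā₀⁻¹z), Θ_q(ā₀⁻¹qz), Θ_q(b̄⁻¹z⁻¹), Θ_q(b̄⁻¹q⁻¹z⁻¹) with b = a_∞⁻¹, and Θ_q(z/v_i),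 Θ_q(qz/v_i) for each i) are nonzero. -/
/-- Jacobi's theta function `Θ_q(z) = ∑_{n ∈ ℤ} q^{-n(n-1)/2} z^n`. -/
noncomputable def thetaQ (q z : ℂ) : ℂ :=
  ∑' n : ℤ, q ^ (-(n * (n - 1) / 2)) * z ^ n

/-- `ε(c) = ⌊log|c| / log|q|⌋`. -/
noncomputable def qExpInt (q c : ℂ) : ℤ :=
  ⌊Real.log ‖c‖ / Real.log ‖q‖⌋

/-- `c̄ = q^{-ε(c)} c`, the representative of `c` in the fundamental annulus. -/
noncomputable def fundRep (q c : ℂ) : ℂ :=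
  q ^ (-(qExpInt q c)) * c

/-- The `q`-character `e_{q,c}(z) = z^{ε(c)} Θ_q(z) / Θ_q(c̄⁻¹ z)`. -/
noncomputable def qChar (q c z : ℂ) : ℂ :=
  z ^ (qExpInt q c) * thetaQ q z / thetaQ q ((fundRep q c)⁻¹ * z)

/-- The Birkhoff connection number of a rank-one equation. -/
noncomputable def connNumber (q : ℂ) {r : ℕ} (a₀ aInf : ℂ) (u v : Fin r → ℂ)
    (z : ℂ) : ℂ :=
  (qChar q a₀ z / qChar q aInf⁻¹ z⁻¹) *
    ∏ i : Fin r, (u i * thetaQ q (z / u i)) / (v i * thetaQ q (z / v i))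

lemma theta_q_mul (q z : ℂ) (hq : q ≠ 0) (hz : z ≠ 0) :
    thetaQ q (q * z) = q * z * thetaQ q z := by
  unfold thetaQ
  rw [← tsum_mul_left]
  rw [← (Equiv.addRight (1 : ℤ)).tsum_eq
    (fun n : ℤ => q ^ (-(n * (n - 1) / 2)) * (q * z) ^ n)]
  refine tsum_congr fun n => ?_
  simp only [Equiv.coe_addRight]
  have hqz : q * z ≠ 0 := mul_ne_zero hq hz
  have e1 : (q * z) ^ (n + 1) = q ^ n * z ^ n * (q * z) := by
    rw [zpow_add_one₀ hqz, mul_zpow]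
  have hex : -((n + 1) * (n + 1 - 1) / 2) = -(n * (n - 1) / 2) - n := by
    have h : (n + 1) * (n + 1 - 1) = n * (n - 1) + 2 * n := by ring
    have h2 : (2 : ℤ) ∣ n * (n - 1) := by
      have := Int.even_mul_succ_self (n - 1)
      rw [sub_add_cancel] at this
      rw [mul_comm]
      exact this.two_dvd
    rw [h]
    omega
  rw [hex, zpow_sub₀ hq, e1]
  have hqn : (q : ℂ) ^ n ≠ 0 := zpow_ne_zero _ hq
  field_simp

lemma qChar_q_mul (q c z : ℂ) (hq : q ≠ 0) (hc : c ≠ 0) (hz : z ≠ 0)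
    (hΘ : thetaQ q ((fundRep q c)⁻¹ * z) ≠ 0) :
    qChar q c (q * z) = c * qChar q c z := by
  have hf : fundRep q c ≠ 0 := mul_ne_zero (zpow_ne_zero _ hq) hc
  have hcf : q ^ (qExpInt q c) * fundRep q c = c := by
    unfold fundRep
    rw [← mul_assoc, ← zpow_add₀ hq]
    simp
  unfold qChar
  have e1 : (fundRep q c)⁻¹ * (q * z) = q * ((fundRep q c)⁻¹ * z) := by ring
  rw [e1, theta_q_mul q _ hq (mul_ne_zero (inv_ne_zero hf) hz), theta_q_mul q z hq hz,
    mul_zpow]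
  have hqz : q * ((fundRep q c)⁻¹ * z) ≠ 0 :=
    mul_ne_zero hq (mul_ne_zero (inv_ne_zero hf) hz)
  have hfi : (fundRep q c)⁻¹ = q ^ qExpInt q c / c := by
    unfold fundRep
    rw [mul_inv, zpow_neg, inv_inv]
    ring
  rw [← mul_div_assoc, div_eq_div_iff (mul_ne_zero hqz hΘ) hΘ, hfi]
  field_simp

/-- The connection number `p` of the rank-one equation
`σ_q y = a(z) y`, `a(z) = a₀ ∏ (1 - u_i⁻¹z)/(1 - v_i⁻¹z)`, is elliptic:
`p(qz) = p(z)` wherever the theta denominators do not vanish. -/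
theorem connection_number_elliptic
    (q : ℂ) (hq : 1 < ‖q‖) {r : ℕ}
    (u v : Fin r → ℂ) (hu : ∀ i, u i ≠ 0) (hv : ∀ i, v i ≠ 0)
    (a₀ aInf : ℂ) (ha₀ : a₀ ≠ 0) (haInf : aInf ≠ 0)
    (hbal : aInf * ∏ i : Fin r, u i = a₀ * ∏ i : Fin r, v i)
    (z : ℂ) (hz : z ≠ 0)
    (h1 : thetaQ q ((fundRep q a₀)⁻¹ * z) ≠ 0)
    (h2 : thetaQ q ((fundRep q a₀)⁻¹ * (q * z)) ≠ 0)
    (h3 : thetaQ q ((fundRep q aInf⁻¹)⁻¹ * z⁻¹) ≠ 0)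
    (h4 : thetaQ q ((fundRep q aInf⁻¹)⁻¹ * (q * z)⁻¹) ≠ 0)
    (h5 : ∀ i : Fin r, thetaQ q (z / v i) ≠ 0)
    (h6 : ∀ i : Fin r, thetaQ q (q * z / v i) ≠ 0) :
    connNumber q a₀ aInf u v (q * z) = connNumber q a₀ aInf u v z := by
  have hq0 : q ≠ 0 := by
    intro h
    rw [h, norm_zero] at hq
    exact absurd hq (by norm_num)
  have hqz : q * z ≠ 0 := mul_ne_zero hq0 hz
  have hA : qChar q a₀ (q * z) = a₀ * qChar q a₀ z :=
    qChar_q_mul q a₀ z hq0 ha₀ hz h1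
  have hw : q * (q * z)⁻¹ = z⁻¹ := by
    field_simp
  have hB0 := qChar_q_mul q aInf⁻¹ (q * z)⁻¹ hq0 (inv_ne_zero haInf) (inv_ne_zero hqz) h4
  rw [hw] at hB0
  have hB : qChar q aInf⁻¹ (q * z)⁻¹ = aInf * qChar q aInf⁻¹ z⁻¹ := by
    rw [hB0, ← mul_assoc, mul_inv_cancel₀ haInf, one_mul]
  have hP : ∀ i : Fin r, (u i * thetaQ q (q * z / u i)) / (v i * thetaQ q (q * z / v i))
      = (v i / u i) * ((u i * thetaQ q (z / u i)) / (v i * thetaQ q (z / v i))) := by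
    intro i
    have e1 : q * z / u i = q * (z / u i) := by ring
    have e2 : q * z / v i = q * (z / v i) := by ring
    rw [e1, e2, theta_q_mul _ _ hq0 (div_ne_zero hz (hu i)),
      theta_q_mul _ _ hq0 (div_ne_zero hz (hv i))]
    have hui := hu i
    have hvi := hv i
    have hΘv := h5 i
    field_simp
  have hpu : (∏ i : Fin r, u i) ≠ 0 := Finset.prod_ne_zero_iff.mpr fun i _ => hu i
  have hfac : a₀ / aInf * ((∏ i : Fin r, v i) / (∏ i : Fin r, u i)) = 1 := by
    rw [div_mul_div_comm, div_eq_one_iff_eq (mul_ne_zero haInf hpu)]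
    exact hbal.symm
  unfold connNumber
  rw [hA, hB, Finset.prod_congr rfl (fun i _ => hP i), Finset.prod_mul_distrib,
    Finset.prod_div_distrib]
  set A := qChar q a₀ z
  set B := qChar q aInf⁻¹ z⁻¹
  set P := ∏ i : Fin r, (u i * thetaQ q (z / u i)) / (v i * thetaQ q (z / v i))
  linear_combination (A / B * P) * hfac
end

section
/- Let τ₀ ∈ ℂ with Im τ₀ > 0, let n ≥ 1 and let a₁,…,aₙ, b₁,…,bₙ be real numbers; set γᵢ = aᵢ/τ₀ + bᵢ ∈ ℂ. Let ε > 0 be a real number such that 1/ε does not belong to the ℚ-linear span ℚa₁ + ⋯ + ℚaₙ ⊂ ℝ, and set q = exp(-2πiτ₀ε). Then for every (m₁,…,mₙ) ∈ ℤⁿ the following are equivalent: (i) the exponents q^{γᵢ} = exp(-2πiτ₀εγᵢ) satisfy the multiplicative relation ∏_{i=1}^n (q^{γᵢ})^{mᵢ} = q^k for some k ∈ ℤ; (ii) ∑_{i=1}^n mᵢaᵢ = 0 and ∑_{i=1}^n mᵢbᵢ ∈ ℤ (equivalently, ∑ mᵢγᵢ ∈ ℤ). Hence for all ε outside the countable exceptional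 set E = {ε > 0 : 1/ε ∈ ℚa₁ + ⋯ + ℚaₙ}, the module of multiplicative relations modulo q^ℤ among the exponents q^{γ₁},…,q^{γₙ} equals the module L = {m ∈ ℤⁿ : ∑ mᵢγᵢ ∈ ℤ} of relations of the limit differential equation. -/
/-- Confluence of relations among the exponents: for generic `ε` (such that
`1/ε` is not in the `ℚ`-span of `a₁, …, aₙ`), the multiplicative relations
modulo `q^ℤ` among the exponents `q^{γᵢ}` (`q = exp(-2πiτ₀ε)`,
`γᵢ = aᵢ/τ₀ + bᵢ`) are exactly the additive relations
`∑ mᵢaᵢ = 0 ∧ ∑ mᵢbᵢ ∈ ℤ` of the limit differential equation. -/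
theorem confluence_of_exponent_relations
    (τ₀ : ℂ) (hτ₀ : 0 < τ₀.im) {n : ℕ} (hn : 1 ≤ n)
    (a b : Fin n → ℝ) (γ : Fin n → ℂ)
    (hγ : ∀ i, γ i = (a i : ℂ) / τ₀ + (b i : ℂ))
    (ε : ℝ) (hε : 0 < ε)
    (hgen : (1 / ε) ∉ Submodule.span ℚ (Set.range a))
    (q : ℂ)
    (hq : q = Complex.exp (-(2 * (Real.pi : ℂ) * Complex.I) * τ₀ * (ε : ℂ))) :
    ∀ m : Fin n → ℤ,
      (∃ k : ℤ,
          (∏ i : Fin n,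
            (Complex.exp (-(2 * (Real.pi : ℂ) * Complex.I) * τ₀ * (ε : ℂ) * γ i))
              ^ (m i)) = q ^ k) ↔
        ((∑ i : Fin n, (m i : ℝ) * a i = 0) ∧
          ∃ k : ℤ, (∑ i : Fin n, (m i : ℝ) * b i) = (k : ℝ)) := by
  intro m
  have hτ0 : τ₀ ≠ 0 := fun h => by simp [h] at hτ₀
  have hτim : τ₀.im ≠ 0 := ne_of_gt hτ₀
  set c : ℂ := -(2 * (Real.pi : ℂ) * Complex.I) * τ₀ * (ε : ℂ) with hc
  set A : ℝ := ∑ i : Fin n, (m i : ℝ) * a i with hA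
  set B : ℝ := ∑ i : Fin n, (m i : ℝ) * b i with hB
  have h2pi : (2 * (Real.pi : ℂ) * Complex.I) ≠ 0 := by
    refine mul_ne_zero (mul_ne_zero two_ne_zero ?_) Complex.I_ne_zero
    exact_mod_cast Real.pi_ne_zero
  have hS : (∑ i : Fin n, (m i : ℂ) * γ i) = (A : ℂ) / τ₀ + (B : ℂ) := by
    have h1 : ∀ i ∈ Finset.univ, (m i : ℂ) * γ i
        = (((m i : ℝ) * a i : ℝ) : ℂ) / τ₀ + (((m i : ℝ) * b i : ℝ) : ℂ) := by
      intro i _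
      rw [hγ]; push_cast; ring
    rw [Finset.sum_congr rfl h1, Finset.sum_add_distrib, ← Finset.sum_div,
      hA, hB]
    push_cast
    ring
  have key : ∀ k : ℤ,
      (∏ i : Fin n, Complex.exp (c * γ i) ^ (m i)) = q ^ k ↔
        Complex.exp (c * ((A : ℂ) / τ₀ + (B : ℂ))) = Complex.exp ((k : ℂ) * c) := by
    intro k
    have h1 : (∏ i : Fin n, Complex.exp (c * γ i) ^ (m i))
        = Complex.exp (c * ((A : ℂ) / τ₀ + (B : ℂ))) := by
      calc ∏ i : Fin n, Complex.exp (c * γ i) ^ (m i)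
          = ∏ i : Fin n, Complex.exp ((m i : ℂ) * (c * γ i)) :=
            Finset.prod_congr rfl fun i _ => (Complex.exp_int_mul _ _).symm
        _ = Complex.exp (∑ i : Fin n, (m i : ℂ) * (c * γ i)) :=
            (Complex.exp_sum _ _).symm
        _ = Complex.exp (c * ((A : ℂ) / τ₀ + (B : ℂ))) := by
            rw [← hS, Finset.mul_sum]
            congr 1
            exact Finset.sum_congr rfl fun i _ => by ring
    have h2 : q ^ k = Complex.exp ((k : ℂ) * c) := by
      rw [hq]; exact (Complex.exp_int_mul _ _).symm
    rw [h1, h2]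
  have hcS : c * ((A : ℂ) / τ₀ + (B : ℂ))
      = -(2 * (Real.pi : ℂ) * Complex.I) * ((ε : ℂ) * A + τ₀ * ((ε : ℂ) * B)) := by
    rw [hc]; field_simp
  constructor
  · rintro ⟨k, hk⟩
    rw [key k, Complex.exp_eq_exp_iff_exists_int] at hk
    obtain ⟨l, hl⟩ := hk
    rw [hcS, hc] at hl
    have hmain : ((ε * A + l : ℝ) : ℂ) + τ₀ * ((ε * (B - k) : ℝ) : ℂ) = 0 := by
      apply mul_left_cancel₀ h2pi
      push_cast
      linear_combination -hl
    have him := congrArg Complex.im hmain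
    simp [Complex.add_im, Complex.mul_im] at him
    have hBk : B = (k : ℝ) := by
      rcases him with h | h | h
      · exact absurd h hτim
      · exact absurd h hε.ne'
      · linarith
    have hre := congrArg Complex.re hmain
    simp [Complex.add_re, Complex.mul_re, hBk] at hre
    -- hre : ε * A + l = 0 (roughly)
    have hεA : ε * A + l = 0 := by
      simpa [hBk] using hre
    have hA0 : A = 0 := by
      by_contra hA0
      have hl0 : (l : ℝ) ≠ 0 := by
        intro h
        apply hA0
        have := hεA
        rw [h] at this
        have : ε * A = 0 := by linarith
        rcases mul_eq_zero.1 this with h' | h'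
        · exact absurd h' hε.ne'
        · exact h'
      have hAmem : A ∈ Submodule.span ℚ (Set.range a) := by
        rw [hA]
        refine Submodule.sum_mem _ fun i _ => ?_
        have : (m i : ℝ) * a i = ((m i : ℚ)) • a i := by
          rw [Rat.smul_def]; push_cast; ring
        rw [this]
        exact Submodule.smul_mem _ _ (Submodule.subset_span ⟨i, rfl⟩)
      refine hgen ?_
      have hmem := Submodule.smul_mem _ (-(1 : ℚ) / (l : ℚ)) hAmem
      have heq : (1 / ε : ℝ) = (-(1 : ℚ) / (l : ℚ)) • A := by
        rw [Rat.smul_def]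
        push_cast
        have hl' : (l : ℝ) = -(ε * A) := by linarith
        field_simp [hl']
        exact hl'
      rw [heq]
      exact hmem
    exact ⟨hA0, k, hBk⟩
  · rintro ⟨hA0, k, hBk⟩
    refine ⟨k, (key k).mpr ?_⟩
    congr 1
    rw [hA0, hBk]
    push_cast
    ring
end

section
/- Let P ∈ ℂ⟦U⟧ be a formal power series with constant term P(0) = 1 such that, in the formal power series ring ℂ⟦U,V⟧ in two variables, P(U + V + U·V) = P(U)·P(V) (the left side being the substitution of the series U + V + UV, which has zero constant term, into P). Then there exists a ∈ ℂ such that P(U) = (1 + U)^a; explicitly, for every k ≥ 0 the k-th coefficient of P equals the generalized binomial coefficient C(a,k) = a(a-1)⋯(a-k+1)/k!. -/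
open MvPowerSeries Finsupp

noncomputable def substPS (s : MvPowerSeries (Fin 2) ℂ) (P : PowerSeries ℂ) :
    MvPowerSeries (Fin 2) ℂ :=
  fun μ => ∑ k ∈ Finset.range (μ 0 + μ 1 + 1),
    PowerSeries.coeff k P * MvPowerSeries.coeff μ (s ^ k)

noncomputable def sSer : MvPowerSeries (Fin 2) ℂ :=
  MvPowerSeries.X 0 + MvPowerSeries.X 1 + MvPowerSeries.X 0 * MvPowerSeries.X 1

noncomputable def e0 : Fin 2 →₀ ℕ := Finsupp.single 0 1
noncomputable def e1 : Fin 2 →₀ ℕ := Finsupp.single 1 1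

lemma sSer_eq : sSer = monomial e0 1 + monomial e1 1 + monomial (e0 + e1) 1 := by
  rw [sSer, X_def, X_def, monomial_mul_monomial, one_mul]
  rfl

lemma coeff_mul_sSer (f : MvPowerSeries (Fin 2) ℂ) (μ : Fin 2 →₀ ℕ) :
    MvPowerSeries.coeff μ (f * sSer) =
      (if e0 ≤ μ then MvPowerSeries.coeff (μ - e0) f else 0) +
      (if e1 ≤ μ then MvPowerSeries.coeff (μ - e1) f else 0) +
      (if e0 + e1 ≤ μ then MvPowerSeries.coeff (μ - (e0 + e1)) f else 0) := by
  rw [sSer_eq, mul_add, mul_add, map_add, map_add,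
    coeff_mul_monomial, coeff_mul_monomial, coeff_mul_monomial]
  simp [mul_one]

lemma fin2_ext {μ ν : Fin 2 →₀ ℕ} (h0 : μ 0 = ν 0) (h1 : μ 1 = ν 1) : μ = ν := by
  ext i
  fin_cases i <;> assumption

lemma fin2_le {μ ν : Fin 2 →₀ ℕ} (h0 : μ 0 ≤ ν 0) (h1 : μ 1 ≤ ν 1) : μ ≤ ν := by
  intro i
  fin_cases i <;> assumption

@[simp] lemma e0_apply0 : e0 0 = 1 := by simp [e0]
@[simp] lemma e0_apply1 : e0 1 = 0 := by simp [e0, Finsupp.single_apply]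
@[simp] lemma e1_apply0 : e1 0 = 0 := by simp [e1, Finsupp.single_apply]
@[simp] lemma e1_apply1 : e1 1 = 1 := by simp [e1]

noncomputable def μk (k : ℕ) : Fin 2 →₀ ℕ := Finsupp.single 0 k + e1

@[simp] lemma μk_apply0 (k : ℕ) : μk k 0 = k := by simp [μk, Finsupp.single_apply]
@[simp] lemma μk_apply1 (k : ℕ) : μk k 1 = 1 := by simp [μk, Finsupp.single_apply]

@[simp] lemma single0_apply0 (k : ℕ) : (Finsupp.single (0 : Fin 2) k) 0 = k := by simp
@[simp] lemma single0_apply1 (k : ℕ) : (Finsupp.single (0 : Fin 2) k) 1 = 0 := by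
  simp [Finsupp.single_apply]

lemma sub_apply' (μ ν : Fin 2 →₀ ℕ) (i : Fin 2) : (μ - ν) i = μ i - ν i :=
  Finsupp.tsub_apply μ ν i

lemma coeff_sSer_pow_single (j k : ℕ) :
    MvPowerSeries.coeff (Finsupp.single 0 k) (sSer ^ j) = if j = k then 1 else 0 := by
  induction j generalizing k with
  | zero =>
    rw [pow_zero, MvPowerSeries.coeff_one]
    simp [Finsupp.single_eq_zero, eq_comm]
  | succ j ih =>
    rw [pow_succ, coeff_mul_sSer]
    have h1 : ¬ e1 ≤ Finsupp.single (0 : Fin 2) k := by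
      intro h; have := h 1; simp at this
    have h01 : ¬ e0 + e1 ≤ Finsupp.single (0 : Fin 2) k := by
      intro h; have := h 1; simp [Finsupp.add_apply] at this
    rw [if_neg h1, if_neg h01, add_zero, add_zero]
    rcases k with _ | k
    · have h0 : ¬ e0 ≤ Finsupp.single (0 : Fin 2) 0 := by
        intro h; have := h 0; simp at this
      rw [if_neg h0, if_neg (by omega)]
    · have h0 : e0 ≤ Finsupp.single (0 : Fin 2) (k + 1) := by
        apply fin2_le <;> simp
      have hsub : Finsupp.single (0 : Fin 2) (k + 1) - e0 = Finsupp.single 0 k := by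
        apply fin2_ext <;> simp [sub_apply']
      rw [if_pos h0, hsub, ih]
      simp only [Nat.succ_inj]

lemma coeff_sSer_pow_mixed (j k : ℕ) :
    MvPowerSeries.coeff (μk k) (sSer ^ j) =
      (if j = k then (j : ℂ) else 0) + (if j = k + 1 then (j : ℂ) else 0) := by
  induction j generalizing k with
  | zero =>
    rw [pow_zero, MvPowerSeries.coeff_one]
    have : μk k ≠ 0 := by
      intro h
      have := congrArg (fun f : Fin 2 →₀ ℕ => f 1) h
      simp at this
    simp [this]
  | succ j ih =>
    rw [pow_succ, coeff_mul_sSer]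
    have he1 : e1 ≤ μk k := by apply fin2_le <;> simp
    have hsub1 : μk k - e1 = Finsupp.single 0 k := by
      apply fin2_ext <;> simp [sub_apply']
    rcases k with _ | k
    · have h0 : ¬ e0 ≤ μk 0 := by intro h; have := h 0; simp at this
      have h01 : ¬ e0 + e1 ≤ μk 0 := by
        intro h; have := h 0; simp [Finsupp.add_apply] at this
      rw [if_neg h0, if_neg h01, if_pos he1, hsub1, coeff_sSer_pow_single]
      split_ifs <;> simp_all
    · have h0 : e0 ≤ μk (k + 1) := by apply fin2_le <;> simp
      have h01 : e0 + e1 ≤ μk (k + 1) := by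
        apply fin2_le <;> simp [Finsupp.add_apply]
      have hsub0 : μk (k + 1) - e0 = μk k := by
        apply fin2_ext <;> simp [sub_apply']
      have hsub01 : μk (k + 1) - (e0 + e1) = Finsupp.single 0 k := by
        apply fin2_ext <;> simp [sub_apply', Finsupp.add_apply]
      rw [if_pos h0, if_pos he1, if_pos h01, hsub0, hsub1, hsub01, ih,
        coeff_sSer_pow_single, coeff_sSer_pow_single]
      split_ifs <;> first | (exfalso; omega) | (push_cast; ring1)

lemma coeff_substPS (s : MvPowerSeries (Fin 2) ℂ) (P : PowerSeries ℂ) (μ : Fin 2 →₀ ℕ) :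
    MvPowerSeries.coeff μ (substPS s P) =
      ∑ k ∈ Finset.range (μ 0 + μ 1 + 1),
        PowerSeries.coeff k P * MvPowerSeries.coeff μ (s ^ k) := rfl

lemma coeff_substPS_X (i : Fin 2) (P : PowerSeries ℂ) (μ : Fin 2 →₀ ℕ) :
    MvPowerSeries.coeff μ (substPS (MvPowerSeries.X i) P) =
      if μ = Finsupp.single i (μ i) then PowerSeries.coeff (μ i) P else 0 := by
  classical
  rw [coeff_substPS]
  have hle : μ i ≤ μ 0 + μ 1 := by
    fin_cases i
    · exact Nat.le_add_right _ _
    · exact Nat.le_add_left _ _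
  have hmem : μ i ∈ Finset.range (μ 0 + μ 1 + 1) := by
    rw [Finset.mem_range]; omega
  by_cases h : μ = Finsupp.single i (μ i)
  · rw [if_pos h]
    have hterm : ∀ k, PowerSeries.coeff k P *
        MvPowerSeries.coeff μ (MvPowerSeries.X i ^ k) =
        if k = μ i then PowerSeries.coeff (μ i) P else 0 := by
      intro k
      rw [MvPowerSeries.coeff_X_pow]
      by_cases hk : k = μ i
      · subst hk; rw [if_pos h, if_pos rfl, mul_one]
      · rw [if_neg, mul_zero, if_neg hk]
        intro hμ; apply hk; rw [hμ]; simp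
    simp_rw [hterm]
    rw [Finset.sum_ite_eq' (Finset.range (μ 0 + μ 1 + 1)) (μ i)
      (fun _ => PowerSeries.coeff (μ i) P), if_pos hmem]
  · rw [if_neg h]
    apply Finset.sum_eq_zero
    intro k _
    rw [MvPowerSeries.coeff_X_pow, if_neg, mul_zero]
    intro hμ
    apply h
    have hk : μ i = k := by rw [hμ]; simp
    rw [hk]; exact hμ


set_option maxHeartbeats 800000 in
lemma coeff_prod (P : PowerSeries ℂ) (k : ℕ) :
    MvPowerSeries.coeff (μk k)
      (substPS (MvPowerSeries.X 0) P * substPS (MvPowerSeries.X 1) P) =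
      PowerSeries.coeff k P * PowerSeries.coeff 1 P := by
  classical
  rw [MvPowerSeries.coeff_mul]
  rw [Finset.sum_eq_single (Finsupp.single (0 : Fin 2) k, e1)]
  · rw [coeff_substPS_X, coeff_substPS_X]
    have c1 : (Finsupp.single (0 : Fin 2) k) =
        Finsupp.single 0 ((Finsupp.single (0 : Fin 2) k) 0) := by
      apply fin2_ext <;> simp
    have c2 : e1 = Finsupp.single 1 (e1 1) := by
      apply fin2_ext <;> simp
    rw [if_pos c1, if_pos c2, single0_apply0, e1_apply1]
  · rintro ⟨p1, p2⟩ hmem hne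
    rw [Finset.HasAntidiagonal.mem_antidiagonal] at hmem
    rw [coeff_substPS_X, coeff_substPS_X]
    by_cases c1 : p1 = Finsupp.single 0 (p1 0)
    · by_cases c2 : p2 = Finsupp.single 1 (p2 1)
      · exfalso
        apply hne
        have h0' : p1 0 + p2 0 = k := by
          have := congrArg (fun f : Fin 2 →₀ ℕ => f 0) hmem
          simpa [μk, Finsupp.add_apply] using this
        have h1' : p1 1 + p2 1 = 1 := by
          have := congrArg (fun f : Fin 2 →₀ ℕ => f 1) hmem
          simpa [μk, Finsupp.add_apply] using this
        have hp11 : p1 1 = 0 := by rw [c1]; simp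
        have hp20 : p2 0 = 0 := by rw [c2]; simp [Finsupp.single_apply]
        have hp10 : p1 0 = k := by omega
        have hp21 : p2 1 = 1 := by omega
        refine Prod.ext ?_ ?_
        · show p1 = _; rw [c1, hp10]
        · show p2 = _; rw [c2, hp21]; rfl
      · rw [if_neg c2, mul_zero]
    · rw [if_neg c1, zero_mul]
  · intro h
    exfalso
    apply h
    rw [Finset.HasAntidiagonal.mem_antidiagonal]
    apply fin2_ext <;> simp [μk, Finsupp.add_apply]

lemma coeff_lhs (P : PowerSeries ℂ) (k : ℕ) :
    MvPowerSeries.coeff (μk k) (substPS sSer P) =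
      (k : ℂ) * PowerSeries.coeff k P +
      ((k : ℂ) + 1) * PowerSeries.coeff (k + 1) P := by
  rw [coeff_substPS, μk_apply0, μk_apply1]
  simp_rw [coeff_sSer_pow_mixed, mul_add]
  rw [Finset.sum_add_distrib]
  have h1 : ∀ j, PowerSeries.coeff j P * (if j = k then (j : ℂ) else 0) =
      if j = k then PowerSeries.coeff j P * (j : ℂ) else 0 := by
    intro j; split_ifs <;> simp
  have h2 : ∀ j, PowerSeries.coeff j P * (if j = k + 1 then (j : ℂ) else 0) =
      if j = k + 1 then PowerSeries.coeff j P * (j : ℂ) else 0 := by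
    intro j; split_ifs <;> simp
  simp_rw [h1, h2]
  rw [Finset.sum_ite_eq' (Finset.range (k + 1 + 1)) k
      (fun j => PowerSeries.coeff j P * (j : ℂ)),
    Finset.sum_ite_eq' (Finset.range (k + 1 + 1)) (k + 1)
      (fun j => PowerSeries.coeff j P * (j : ℂ))]
  rw [if_pos (Finset.mem_range.mpr (by omega)), if_pos (Finset.mem_range.mpr (by omega))]
  push_cast
  ring

/-- A formal power series `P` with `P(0) = 1` satisfying
`P(U + V + UV) = P(U)·P(V)` in `ℂ⟦U,V⟧` is `(1 + U)^a` for some `a ∈ ℂ`: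
its `k`-th coefficient is the generalized binomial coefficient
`C(a,k) = a(a-1)⋯(a-k+1)/k!`. -/
theorem formal_binomial_functional_equation
    (P : PowerSeries ℂ) (hP0 : PowerSeries.constantCoeff P = 1)
    (hmul : substPS
        (MvPowerSeries.X 0 + MvPowerSeries.X 1 +
          MvPowerSeries.X 0 * MvPowerSeries.X 1) P =
      substPS (MvPowerSeries.X 0) P * substPS (MvPowerSeries.X 1) P) :
    ∃ a : ℂ, ∀ k : ℕ,
      PowerSeries.coeff k P =
        (∏ i ∈ Finset.range k, (a - i)) / (k.factorial : ℂ) := by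
  have hs : MvPowerSeries.X 0 + MvPowerSeries.X 1 +
      MvPowerSeries.X 0 * MvPowerSeries.X 1 = sSer := rfl
  rw [hs] at hmul
  have hrec : ∀ k : ℕ, (k : ℂ) * PowerSeries.coeff k P +
      ((k : ℂ) + 1) * PowerSeries.coeff (k + 1) P =
      PowerSeries.coeff k P * PowerSeries.coeff 1 P := by
    intro k
    have h := congrArg (MvPowerSeries.coeff (μk k)) hmul
    rwa [coeff_lhs, coeff_prod] at h
  refine ⟨PowerSeries.coeff 1 P, ?_⟩
  intro k
  induction k with
  | zero => simpa using hP0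
  | succ k ih =>
    have h := hrec k
    rw [ih] at h
    have hk1 : ((k : ℂ) + 1) ≠ 0 := Nat.cast_add_one_ne_zero k
    have hfac : (k.factorial : ℂ) ≠ 0 := Nat.cast_ne_zero.mpr k.factorial_ne_zero
    rw [Finset.prod_range_succ, Nat.factorial_succ]
    field_simp at h ⊢
    push_cast
    linear_combination h
end
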